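/- arXiv:2412.18598 — 9 statements merged into one kernel-verified Lean document; each statement's English description precedes it below -/
import Mathlib

section
/- For all natural numbers n, R ≥ 1, any strictly increasing sequence of natural numbers 1 ≤ h_1 < h_2 < ⋯ < h_R, and any permutations σ_1, …, σ_R of {1, …, n}, there exist finite nonempty subsets A_1, …, A_n of the integers ℤ such that for each 1 ≤ r ≤ R and all 1 ≤ j, k ≤ n, one has |h_r A_j| < |h_r A_k| if and only if σ_r(j) < σ_r(k). -/
/-!
Induction on the number of levels; for a single level `h` the intervals `[0, π j]` work.
To add a level `H` above levels already realised by sets `A'_j`, take the gadget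
`G_N = [0, n] ∪ {N}`. Its `h`-fold sumset is the union of the blocks `[iN, iN + (h - i)n]`,
`i ≤ h`, which are disjoint when `N > hn`; so for `(H - 1)n < N ≤ Hn` the size `|h • G_N|` does
not depend on `N` when `h < H`, while at level `H` the first blocks overlap and `|H • G_N|`
strictly increases with `N`. Writing `K` base-`m` digits from `G_{N_j}` below `A'_j` multiplies
sumset sizes: `|h • A_j| = |h • G_{N_j}| ^ K * |h • A'_j|`. Below `H` the factor is the same for
all `j` and the old orders survive; at `H` and for `K` large the factor decides the order.
-/

open Pointwise Finset

lemma Int.Icc_add_Icc {a b c d : ℤ} (hab : a ≤ b) (hcd : c ≤ d) :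
    Icc a b + Icc c d = Icc (a + c) (b + d) := by
  refine (Icc_add_Icc_subset a b c d).antisymm fun x hx => ?_
  rw [mem_Icc] at hx
  refine mem_add.2 ⟨max a (x - d), ?_, x - max a (x - d), ?_, by ring⟩ <;>
    rw [mem_Icc] <;> omega

lemma Int.nsmul_Icc_zero {c : ℤ} (hc : 0 ≤ c) (h : ℕ) : h • Icc 0 c = Icc 0 (h * c) := by
  induction h with
  | zero => rw [zero_nsmul, Nat.cast_zero, zero_mul, Icc_self, singleton_zero]
  | succ h ih =>
    rw [succ_nsmul, ih, Int.Icc_add_Icc (by positivity) hc]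
    push_cast; ring_nf

lemma Int.nsmul_subset_Icc_zero {s : Finset ℤ} {c : ℤ} (hc : 0 ≤ c) (hs : s ⊆ Icc 0 c)
    (h : ℕ) :
    h • s ⊆ Icc 0 (h * c) := by
  rw [← Int.nsmul_Icc_zero hc]
  exact nsmul_subset_nsmul hs (by simpa using hc) le_rfl

lemma Int.card_add_image_mulLeft {a : Finset ℤ} {m : ℤ} (ha : a ⊆ Ico 0 m) (b : Finset ℤ) :
    #(a + b.image (AddMonoidHom.mulLeft m)) = #a * #b := by
  change #(image₂ (· + ·) a _) = _
  rw [image₂_image_right, card_image₂_iff]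
  rintro ⟨x, y⟩ ⟨hx, -⟩ ⟨x', y'⟩ ⟨hx', -⟩ hxy
  simp only [AddMonoidHom.coe_mulLeft, mem_coe] at hxy hx hx'
  obtain ⟨hx0, hxm⟩ := mem_Ico.1 (ha hx)
  obtain ⟨hx0', hxm'⟩ := mem_Ico.1 (ha hx')
  have hxx' : x = x' := by
    rw [← Int.emod_eq_of_lt hx0 hxm, ← Int.emod_eq_of_lt hx0' hxm',
      ← Int.add_mul_emod_self_left x m y, hxy, Int.add_mul_emod_self_left]
  subst hxx'
  rw [mul_left_cancel₀ (by omega : m ≠ 0) (by omega : m * y = m * y')]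

/-- `digitStack m G B k = G + m • G + ⋯ + m ^ (k - 1) • G + m ^ k • B` (dilates, not sumsets). -/
def digitStack (m : ℤ) (G B : Finset ℤ) : ℕ → Finset ℤ
  | 0 => B
  | k + 1 => G + (digitStack m G B k).image (AddMonoidHom.mulLeft m)

section digitStack

variable (m : ℤ) {G B : Finset ℤ}

lemma digitStack_nonempty (hG : G.Nonempty) (hB : B.Nonempty) :
    ∀ k, (digitStack m G B k).Nonempty
  | 0 => hB
  | k + 1 => hG.add ((digitStack_nonempty hG hB k).image _)

lemma nsmul_digitStack (h : ℕ) :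
    ∀ k, h • digitStack m G B k = digitStack m (h • G) (h • B) k
  | 0 => rfl
  | k + 1 => by rw [digitStack, digitStack, nsmul_add, ← image_nsmul, nsmul_digitStack h k]

lemma card_digitStack (hG : G ⊆ Ico 0 m) :
    ∀ k, #(digitStack m G B k) = #G ^ k * #B
  | 0 => by simp [digitStack]
  | k + 1 => by
    rw [digitStack, Int.card_add_image_mulLeft hG, card_digitStack hG k, pow_succ]
    ring

end digitStack

lemma card_biUnion_range_Icc {a b : ℕ → ℤ} (ha : Monotone a) (hb : Monotone b) (t : ℕ)
    (hab : ∀ j ≤ t, a j ≤ b j + 1) :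
    (#((range (t + 1)).biUnion fun j => Icc (a j) (b j)) : ℤ) =
      b 0 + 1 - a 0 + ∑ j ∈ range t, min (b (j + 1) + 1 - a (j + 1)) (b (j + 1) - b j) := by
  induction t with
  | zero => simp [Int.toNat_of_nonneg (by linarith [hab 0 le_rfl] : 0 ≤ b 0 + 1 - a 0)]
  | succ t ih =>
    set U := (range (t + 1)).biUnion fun j => Icc (a j) (b j)
    have hU : ∀ x ∈ U, x ≤ b t := by
      simp only [U, mem_biUnion, mem_range, mem_Icc]
      rintro x ⟨j, hj, -, hx⟩
      exact hx.trans (hb (by omega))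
    have hnew : Icc (a (t + 1)) (b (t + 1)) \ U = Icc (max (a (t + 1)) (b t + 1)) (b (t + 1)) := by
      ext x
      simp only [mem_sdiff, mem_Icc, max_le_iff]
      constructor
      · rintro ⟨⟨hx₁, hx₂⟩, hxU⟩
        refine ⟨⟨hx₁, ?_⟩, hx₂⟩
        by_contra! hxt
        exact hxU (mem_biUnion.2 ⟨t, self_mem_range_succ t,
          mem_Icc.2 ⟨(ha t.le_succ).trans hx₁, by omega⟩⟩)
      · rintro ⟨⟨hx₁, hx₂⟩, hx₃⟩
        exact ⟨⟨hx₁, hx₃⟩, fun hxU => by linarith [hU x hxU]⟩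
    rw [range_add_one, biUnion_insert, ← card_sdiff_add_card, hnew, Nat.cast_add,
      ih fun j hj => hab j (by omega), sum_range_succ, Int.card_Icc_of_le]
    all_goals
      have := hab (t + 1) le_rfl
      have : b t ≤ b (t + 1) := hb (by omega)
      omega

lemma biUnion_add {α β : Type*} [DecidableEq β] [Add β] (s : Finset α) (f : α → Finset β)
    (t : Finset β) : s.biUnion f + t = s.biUnion fun i => f i + t := by
  ext x
  simp only [mem_add, mem_biUnion]
  constructor
  · rintro ⟨y, ⟨i, hi, hy⟩, z, hz, rfl⟩
    exact ⟨i, hi, y, hy, z, hz, rfl⟩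
  · rintro ⟨i, hi, y, hy, z, hz, rfl⟩
    exact ⟨y, ⟨i, hi, hy⟩, z, hz, rfl⟩

lemma biUnion_range_union_biUnion_range_succ {α : Type*} [DecidableEq α] (f : ℕ → Finset α)
    (n : ℕ) : (range (n + 1)).biUnion f ∪ (range (n + 1)).biUnion (fun j => f (j + 1)) =
      (range (n + 2)).biUnion f := by
  ext x
  simp only [mem_union, mem_biUnion, mem_range]
  constructor
  · rintro (⟨j, hj, hx⟩ | ⟨j, hj, hx⟩)
    · exact ⟨j, by omega, hx⟩
    · exact ⟨j + 1, by omega, hx⟩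
  · rintro ⟨_ | j, hj, hx⟩
    · exact Or.inl ⟨0, by omega, hx⟩
    · exact Or.inr ⟨j, by omega, hx⟩

noncomputable def gadget (L N : ℤ) : Finset ℤ := insert N (Icc 0 L)

section gadget

variable {L N : ℤ}

lemma gadget_subset_Icc (hL : 0 ≤ L) (hLN : L ≤ N) : gadget L N ⊆ Icc 0 N :=
  insert_subset (mem_Icc.2 ⟨hL.trans hLN, le_rfl⟩) (Icc_subset_Icc_right hLN)

lemma nsmul_gadget_subset_Ico (hL : 0 ≤ L) (hLN : L ≤ N) {h H : ℕ} (hh : h ≤ H) {M : ℤ}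
    (hN : N ≤ M) : h • gadget L N ⊆ Ico 0 (H * M + 1) := by
  refine (Int.nsmul_subset_Icc_zero (hL.trans hLN) (gadget_subset_Icc hL hLN) h).trans
    fun x hx => ?_
  have := mul_le_mul (Nat.cast_le.2 hh : (h : ℤ) ≤ H) hN (hL.trans hLN) (by positivity)
  rw [mem_Icc] at hx
  exact mem_Ico.2 ⟨hx.1, by linarith⟩

lemma nsmul_gadget (hL : 0 ≤ L) (h : ℕ) :
    h • gadget L N = (range (h + 1)).biUnion fun j => Icc (j * N) (j * N + (h - j) * L) := by
  induction h with
  | zero =>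
    rw [zero_nsmul, zero_add, range_one, singleton_biUnion]
    simp [singleton_zero]
  | succ h ih =>
    rw [succ_nsmul, ih, gadget, insert_eq, add_union, biUnion_add, biUnion_add, union_comm,
      ← biUnion_range_union_biUnion_range_succ]
    have hblock : ∀ j ∈ range (h + 1), (0 : ℤ) ≤ (h - j) * L := fun j hj =>
      mul_nonneg (by have := mem_range.1 hj; omega) hL
    congr 1 <;> refine biUnion_congr rfl fun j hj => ?_
    · rw [Int.Icc_add_Icc (by linarith [hblock j hj]) hL]
      congr 1 <;> push_cast <;> ring
    · rw [← Icc_self N, Int.Icc_add_Icc (by linarith [hblock j hj]) le_rfl]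
      congr 1 <;> push_cast <;> ring

lemma card_nsmul_gadget (hL : 0 ≤ L) (hLN : L ≤ N) (h : ℕ) :
    (#(h • gadget L N) : ℤ) =
      h * L + 1 + ∑ j ∈ range h, min ((h - j - 1) * L + 1) (N - L) := by
  rw [nsmul_gadget hL, card_biUnion_range_Icc (a := fun j : ℕ => j * N)
    (b := fun j : ℕ => j * N + (h - j) * L)]
  · simp only [Nat.cast_zero, zero_mul, sub_zero, zero_add, Nat.cast_add, Nat.cast_one]
    congr 1
    refine sum_congr rfl fun j _ => ?_
    congr 1 <;> ring
  · exact monotone_nat_of_le_succ fun j => by push_cast; nlinarith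
  · exact monotone_nat_of_le_succ fun j => by push_cast; nlinarith
  · intro j hj
    have : (j : ℤ) ≤ h := by exact_mod_cast hj
    nlinarith

lemma card_nsmul_gadget_eq_of_lt {N' : ℤ} (hL : 0 ≤ L) (h : ℕ) (hLN : L ≤ N)
    (hLN' : L ≤ N') (hN : h * L < N) (hN' : h * L < N') :
    #(h • gadget L N) = #(h • gadget L N') := by
  have key : ∀ M, L ≤ M → h * L < M →
      (#(h • gadget L M) : ℤ) = h * L + 1 + ∑ j ∈ range h, ((h - j - 1) * L + 1) := by
    intro M hLM hM
    rw [card_nsmul_gadget hL hLM]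
    congr 1
    refine sum_congr rfl fun j _ => min_eq_left ?_
    nlinarith
  exact_mod_cast (key N hLN hN).trans (key N' hLN' hN').symm

lemma card_nsmul_gadget_lt {N' : ℤ} (hL : 0 ≤ L) {h : ℕ} (hh : 0 < h) (hLN : L ≤ N)
    (hNN' : N < N') (hN' : N' ≤ h * L + 1) : #(h • gadget L N) < #(h • gadget L N') := by
  have : (#(h • gadget L N) : ℤ) < #(h • gadget L N') := by
    rw [card_nsmul_gadget hL hLN, card_nsmul_gadget hL (hLN.trans hNN'.le)]
    gcongr ?_ + ?_
    refine sum_lt_sum (fun j _ => by gcongr) ⟨0, mem_range.2 hh, ?_⟩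
    rw [min_eq_right (by push_cast; linarith), min_eq_right (by push_cast; linarith)]
    linarith
  exact_mod_cast this

end gadget

lemma pow_mul_add_le_mul_add_one_pow (a : ℕ) : ∀ K, a ^ K * (a + K) ≤ a * (a + 1) ^ K
  | 0 => by simp
  | K + 1 => by
    have ih := pow_mul_add_le_mul_add_one_pow a K
    calc a ^ (K + 1) * (a + (K + 1)) ≤ a ^ K * (a + K) * (a + 1) := by
          rw [pow_succ]; nlinarith [Nat.zero_le (a ^ K * K)]
      _ ≤ a * (a + 1) ^ K * (a + 1) := by gcongr
      _ = a * (a + 1) ^ (K + 1) := by ring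

lemma pow_mul_lt_succ_pow {a y K : ℕ} (hK : a * y < K) : a ^ K * y < (a + 1) ^ K := by
  rcases Nat.eq_zero_or_pos a with rfl | ha
  · simp [Nat.pos_iff_ne_zero.1 (zero_mul y ▸ hK)]
  refine Nat.lt_of_mul_lt_mul_left (a := a) ?_
  calc a * (a ^ K * y) = a ^ K * (a * y) := by ring
    _ < a ^ K * (a + K) := by gcongr; omega
    _ ≤ a * (a + 1) ^ K := pow_mul_add_le_mul_add_one_pow a K

lemma pow_mul_lt_pow_mul {a b x y K : ℕ} (hab : a < b) (hx : 0 < x) (hK : a * y < K) :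
    a ^ K * y < b ^ K * x :=
  calc a ^ K * y < (a + 1) ^ K := pow_mul_lt_succ_pow hK
    _ ≤ b ^ K := Nat.pow_le_pow_left hab K
    _ ≤ b ^ K * x := Nat.le_mul_of_pos_right _ hx

lemma lt_iff_lt_of_lt_imp_lt {ι α β : Type*} [LinearOrder α] [Preorder β] {f : ι → β}
    (π : ι ≃ α) (hf : ∀ j k, π j < π k → f j < f k) (j k : ι) :
    f j < f k ↔ π j < π k := by
  have hmono : StrictMono (f ∘ π.symm) := fun a b hab => by
    simpa using hf (π.symm a) (π.symm b) (by simpa using hab)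
  simpa using hmono.lt_iff_lt (a := π j) (b := π k)

lemma exists_card_nsmul_order {n : ℕ} {h : ℕ} (hh : 0 < h) (π : Equiv.Perm (Fin n)) :
    ∃ A : Fin n → Finset ℤ, (∀ j, (A j).Nonempty) ∧
      ∀ j k, #(h • A j) < #(h • A k) ↔ π j < π k := by
  refine ⟨fun j => Icc 0 (π j : ℕ), fun j => nonempty_Icc.2 (by positivity),
    lt_iff_lt_of_lt_imp_lt π fun j k hjk => ?_⟩
  have hcard : ∀ v : ℕ, #(h • Icc (0 : ℤ) v) = h * v + 1 := fun v => by
    rw [Int.nsmul_Icc_zero (by positivity), Int.card_Icc]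
    omega
  rw [hcard, hcard]
  gcongr
  exact hjk

lemma exists_extend_card_nsmul_order {n : ℕ} (A' : Fin n → Finset ℤ)
    (hA' : ∀ j, (A' j).Nonempty) {H : ℕ} (hH : 2 ≤ H) (π : Equiv.Perm (Fin n)) :
    ∃ A : Fin n → Finset ℤ, (∀ j, (A j).Nonempty) ∧
      (∀ h < H, ∀ j k, #(h • A j) < #(h • A k) ↔ #(h • A' j) < #(h • A' k)) ∧
      ∀ j k, #(H • A j) < #(H • A k) ↔ π j < π k := by
  set N : ℕ → ℤ := fun v => (H - 1) * n + 1 + v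
  have hHZ : (2 : ℤ) ≤ H := by exact_mod_cast hH
  have hn : (0 : ℤ) ≤ n := by positivity
  have hnN : ∀ v, (n : ℤ) ≤ N v := fun v => by simp only [N]; nlinarith
  have hNn : ∀ v < n, N v ≤ H * n := fun v hv => by
    have : (v : ℤ) + 1 ≤ n := by exact_mod_cast hv
    simp only [N]; linarith
  set m : ℤ := H * (H * n) + 1
  have hGm : ∀ h ≤ H, ∀ v < n, h • gadget n (N v) ⊆ Ico 0 m := fun h hh v hv =>
    nsmul_gadget_subset_Ico hn (hnN v) hh (hNn v hv)
  -- large enough for `pow_mul_lt_pow_mul` with `a = |H • G_v|` and `y = |H • A' j|`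
  set K := (∑ v ∈ range n, #(H • gadget n (N v))) * (∑ j, #(H • A' j)) + 1
  set A : Fin n → Finset ℤ := fun j => digitStack m (gadget n (N (π j))) (A' j) K
  have hcard : ∀ h ≤ H, ∀ j,
      #(h • A j) = #(h • gadget n (N (π j))) ^ K * #(h • A' j) := fun h hh j => by
    rw [nsmul_digitStack, card_digitStack m (hGm h hh _ (π j).isLt)]
  refine ⟨A, fun j => digitStack_nonempty m (insert_nonempty _ _) (hA' j) K,
    fun h hh j k => ?lower, lt_iff_lt_of_lt_imp_lt π fun j k hjk => ?top⟩
  case lower =>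
    have hN : ∀ v, h * (n : ℤ) < N v := fun v => by
      have : (h : ℤ) + 1 ≤ H := by exact_mod_cast hh
      simp only [N]; nlinarith
    rw [hcard h hh.le, hcard h hh.le,
      card_nsmul_gadget_eq_of_lt hn h (hnN _) (hnN _) (hN (π j)) (hN (π k))]
    exact Nat.mul_lt_mul_left (pow_pos (card_pos.2 ((insert_nonempty _ _).nsmul)) K)
  case top =>
    rw [hcard H le_rfl, hcard H le_rfl]
    refine pow_mul_lt_pow_mul ?_ (card_pos.2 (hA' k).nsmul) (Nat.lt_succ_of_le ?_)
    · exact card_nsmul_gadget_lt hn (by omega) (hnN _) (by simpa [N] using hjk)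
        ((hNn _ (π k).isLt).trans (by linarith))
    · exact Nat.mul_le_mul
        (single_le_sum (f := fun v => #(H • gadget n (N v))) (fun _ _ => Nat.zero_le _)
          (mem_range.2 (π j).isLt))
        (single_le_sum (f := fun j => #(H • A' j)) (fun _ _ => Nat.zero_le _) (mem_univ j))

lemma exists_card_nsmul_order_of_strictMono (n R : ℕ) (h : Fin (R + 1) → ℕ)
    (hmono : StrictMono h) (hpos : 0 < h 0) (σ : Fin (R + 1) → Equiv.Perm (Fin n)) :
    ∃ A : Fin n → Finset ℤ, (∀ j, (A j).Nonempty) ∧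
      ∀ r j k, #(h r • A j) < #(h r • A k) ↔ σ r j < σ r k := by
  induction R with
  | zero =>
    obtain ⟨A, hne, hA⟩ := exists_card_nsmul_order hpos (σ 0)
    exact ⟨A, hne, fun r => Fin.fin_one_eq_zero r ▸ hA⟩
  | succ R ih =>
    obtain ⟨A', hne', hA'⟩ := ih (fun r => h r.castSucc)
      (hmono.comp Fin.strictMono_castSucc) hpos (fun r => σ r.castSucc)
    have hH : 2 ≤ h (Fin.last _) := by
      have := hmono.monotone (Fin.zero_le (Fin.last R).castSucc)
      have := hmono (Fin.castSucc_lt_last (Fin.last R))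
      omega
    obtain ⟨A, hne, hlow, htop⟩ := exists_extend_card_nsmul_order A' hne' hH (σ (Fin.last _))
    refine ⟨A, hne, fun r => ?_⟩
    induction r using Fin.lastCases with
    | last => exact htop
    | cast s => exact fun j k => (hlow _ (hmono (Fin.castSucc_lt_last s)) j k).trans (hA' s j k)

theorem prescribed_h_integers_general (n R : ℕ) (hR : 1 ≤ R)
    (h : Fin R → ℕ) (hmono : StrictMono h) (hpos : ∀ r, 1 ≤ h r)
    (σ : Fin R → Equiv.Perm (Fin n)) :
    ∃ A : Fin n → Finset ℤ,
      (∀ k, (A k).Nonempty) ∧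
      ∀ r : Fin R, ∀ j k : Fin n,
        (h r • A j).card < (h r • A k).card ↔ σ r j < σ r k := by
  obtain ⟨R, rfl⟩ := Nat.exists_eq_add_of_le' hR
  exact exists_card_nsmul_order_of_strictMono n R h hmono (hpos 0) σ

/-- For all `n, R ≥ 1`, any strictly increasing sequence `1 ≤ h_1 < ⋯ < h_R` of natural
numbers, and any permutations `σ_1, …, σ_R` of `{1, …, n}`, there exist finite nonempty
subsets `A_1, …, A_n ⊆ ℤ` such that for each `r`, the quantities `|h_r A_1|, …, |h_r A_n|`
have the same relative order as `σ_r`.  (Here `h • A` denotes the `h`-fold sumset.) -/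
theorem prescribed_h_integers (n R : ℕ) (hn : 1 ≤ n) (hR : 1 ≤ R)
    (h : Fin R → ℕ) (hmono : StrictMono h) (hpos : ∀ r, 1 ≤ h r)
    (σ : Fin R → Equiv.Perm (Fin n)) :
    ∃ A : Fin n → Finset ℤ,
      (∀ k, (A k).Nonempty) ∧
      ∀ r : Fin R, ∀ j k : Fin n,
        (h r • A j).card < (h r • A k).card ↔ σ r j < σ r k :=
  prescribed_h_integers_general n R hR h hmono hpos σ
end

section
/- Let p be a prime and let n, H ≥ 1 be natural numbers. Then there exists a natural number N = N_p(n, H) such that for any permutations σ_1, …, σ_H of {1, …, n}, there exist subsets A_1, …, A_n of the group (ℤ/pℤ)^N such that for each 1 ≤ h ≤ H and all 1 ≤ j, k ≤ n, one has |hA_j| < |hA_k| if and only if σ_h(j) < σ_h(k). -/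
/-!
Induction on `H`, keeping the extra invariant that `m • A j` is the whole space for all `m > H`.
Let `T ⊆ K^(H+2)` be the union of the coordinate lines: `m • T` consists of the vectors with at
most `m` nonzero coordinates, so it is a proper subset for `m = H + 1` and everything for
`m ≥ H + 2`. Put `A' j = (A j)^c × S j`, where `S j ⊆ (K^(H+2))^n` is a product of `n` factors,
the first `σ_{H+1}(j)` of them the whole space and the others `T`. Then
`|m • A' j| = |m • A j|^c * |m • S j|`. At level `H + 1` the first factor does not depend on `j`
and the second increases with `σ_{H+1}(j)`. At the levels `m ≤ H` a large exponent `c` lets the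
first factor decide, because `(a + 1)^c > a^c * |(K^(H+2))^n|` for all `0 < a ≤ |K^N|`.
-/

open Finset Fintype Pointwise

theorem Fintype.piFinset_nsmul {ι : Type*} [Fintype ι] [DecidableEq ι] {α : ι → Type*}
    [∀ i, AddMonoid (α i)] [∀ i, DecidableEq (α i)] (S : ∀ i, Finset (α i)) (h : ℕ) :
    h • piFinset S = piFinset fun i => h • S i := by
  induction h with
  | zero => simp only [zero_nsmul]; exact (piFinset_singleton 0).symm
  | succ h ih => simp only [succ_nsmul, ih, piFinset_add]

namespace SumsetOrder

section CoordinateLines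

variable {G : Type*} [AddCommMonoid G] [Fintype G] [DecidableEq G]

def coordLines (s : ℕ) : Finset (Fin s → G) := {x | #{i | x i ≠ 0} ≤ 1}

theorem card_support_le_of_mem_nsmul_coordLines {s h : ℕ} {x : Fin s → G}
    (hx : x ∈ h • coordLines s) : #{i | x i ≠ 0} ≤ h := by
  induction h generalizing x with
  | zero => simp_all
  | succ h ih =>
    rw [succ_nsmul, mem_add] at hx
    obtain ⟨y, hy, z, hz, rfl⟩ := hx
    have hz : #{i | z i ≠ 0} ≤ 1 := (mem_filter.mp hz).2
    calc #{i | (y + z) i ≠ 0}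
        ≤ #((univ.filter fun i => y i ≠ 0) ∪ univ.filter fun i => z i ≠ 0) := by
          refine card_le_card fun i => ?_
          simp only [mem_filter, mem_univ, true_and, mem_union, Pi.add_apply]
          contrapose!
          rintro ⟨hy, hz⟩
          simp_all
      _ ≤ h + 1 := (card_union_le _ _).trans (add_le_add (ih hy) hz)

theorem nsmul_coordLines_ne_univ [Nontrivial G] {s h : ℕ} (hhs : h < s) :
    h • coordLines s ≠ (univ : Finset (Fin s → G)) := by
  intro hfull
  obtain ⟨g, hg⟩ := exists_ne (0 : G)
  have := card_support_le_of_mem_nsmul_coordLines (hfull ▸ mem_univ fun _ : Fin s => g)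
  simp [hg] at this
  omega

theorem nsmul_coordLines_eq_univ {s h : ℕ} (hsh : s ≤ h) :
    h • coordLines s = (univ : Finset (Fin s → G)) := by
  refine eq_univ_of_forall fun x => nsmul_subset_nsmul_right (by simp [coordLines]) hsh ?_
  have hsingle : ∀ i ∈ univ,
      (Pi.single i (x i) : Fin s → G) ∈ ((coordLines s : Finset (Fin s → G)) : Set _) := by
    intro i _
    rw [mem_coe, coordLines, mem_filter]
    refine ⟨mem_univ _, (card_le_card fun j hj => ?_).trans (card_singleton i).le⟩
    rw [mem_singleton]
    by_contra hji
    exact (mem_filter.mp hj).2 (Pi.single_eq_of_ne hji _)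
  have := Set.finsetSum_mem_finsetSum univ _ _ hsingle
  rwa [univ_sum_single, sum_const, card_univ, Fintype.card_fin, ← coe_nsmul, mem_coe] at this

end CoordinateLines

section Staircase

variable {G : Type*} [Fintype G] {n : ℕ}

def staircase (T : Finset G) (r : Fin n) : Finset (Fin n → G) :=
  piFinset fun m => if m < r then univ else T

theorem staircase_nonempty {T : Finset G} (hT : T.Nonempty) (r : Fin n) :
    (staircase T r).Nonempty :=
  piFinset_nonempty.mpr fun m => by split_ifs; exacts [hT.mono (subset_univ T), hT]

theorem nsmul_staircase [AddMonoid G] [DecidableEq G] {h : ℕ} (hh : h ≠ 0) (T : Finset G)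
    (r : Fin n) :
    h • staircase T r = piFinset fun m => if m < r then univ else h • T := by
  simp only [staircase, piFinset_nsmul, apply_ite (h • ·), nsmul_univ hh]

theorem nsmul_staircase_eq_univ [AddMonoid G] [DecidableEq G] {h : ℕ} (hh : h ≠ 0)
    {T : Finset G} (hT : h • T = univ) (r : Fin n) : h • staircase T r = univ := by
  simp [nsmul_staircase hh, hT]

theorem strictMono_card_nsmul_staircase [AddMonoid G] [DecidableEq G] {h : ℕ} (hh : h ≠ 0)
    {T : Finset G} (hT : T.Nonempty) (hT' : h • T ≠ univ) :
    StrictMono fun r : Fin n => #(h • staircase T r) := by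
  intro r r' hrr'
  simp only [nsmul_staircase hh, card_piFinset]
  refine prod_lt_prod (fun m _ => ?_) (fun m _ => ?_) ⟨r, mem_univ _, ?_⟩
  · split_ifs
    exacts [card_pos.mpr univ_nonempty, card_pos.mpr hT.nsmul]
  · split_ifs with h₁ h₂
    exacts [le_rfl, absurd (h₁.trans hrr') h₂, card_le_univ _, le_rfl]
  · simpa [hrr'] using card_lt_card (ssubset_univ_iff.mpr hT')

end Staircase

theorem exists_pow_mul_lt_pow (M Q : ℕ) :
    ∃ c : ℕ, ∀ a b : ℕ, 0 < a → a < b → b ≤ M → a ^ c * Q < b ^ c := by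
  have hgrowth : (1 : ℝ) < 1 + 1 / (M + 1) := by
    have : (0 : ℝ) < 1 / (M + 1) := by positivity
    linarith
  obtain ⟨c, hc⟩ := pow_unbounded_of_one_lt (Q : ℝ) hgrowth
  refine ⟨c, fun a b ha hab hbM => ?_⟩
  have ha' : (0 : ℝ) < a := by exact_mod_cast ha
  have hratio : (1 : ℝ) + 1 / (M + 1) ≤ 1 + 1 / a := by
    gcongr
    exact_mod_cast (hab.trans_le hbM).le.trans (Nat.le_succ M)
  have key : (a : ℝ) ^ c * Q < (b : ℝ) ^ c :=
    calc (a : ℝ) ^ c * Q < a ^ c * (1 + 1 / (M + 1)) ^ c := by gcongr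
      _ ≤ a ^ c * (1 + 1 / a) ^ c := by gcongr
      _ = (a + 1) ^ c := by rw [← mul_pow, mul_add, mul_one_div_cancel ha'.ne', mul_one]
      _ ≤ b ^ c := by gcongr; exact_mod_cast hab
  exact_mod_cast key

section Amplification

variable {G Γ : Type*} [AddMonoid G] [AddMonoid Γ] [DecidableEq G] [DecidableEq Γ]

theorem card_nsmul_piFinset_product (A : Finset G) (E : Finset Γ) (c h : ℕ) :
    #(h • ((piFinset fun _ : Fin c => A) ×ˢ E)) = #(h • A) ^ c * #(h • E) := by
  rw [product_nsmul, card_product, piFinset_nsmul, card_piFinset, prod_const, card_univ,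
    Fintype.card_fin]

theorem card_nsmul_piFinset_product_lt [Fintype G] [Fintype Γ] {c h : ℕ}
    (hc : ∀ a b : ℕ, 0 < a → a < b → b ≤ Fintype.card G → a ^ c * Fintype.card Γ < b ^ c)
    {A A' : Finset G} {E E' : Finset Γ} (hA : A.Nonempty) (hE' : E'.Nonempty)
    (hlt : #(h • A) < #(h • A')) :
    #(h • ((piFinset fun _ : Fin c => A) ×ˢ E)) <
      #(h • ((piFinset fun _ : Fin c => A') ×ˢ E')) := by
  rw [card_nsmul_piFinset_product, card_nsmul_piFinset_product]
  calc #(h • A) ^ c * #(h • E)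
      ≤ #(h • A) ^ c * Fintype.card Γ := by gcongr; exact card_le_univ _
    _ < #(h • A') ^ c := hc _ _ (card_pos.mpr hA.nsmul) hlt (card_le_univ _)
    _ ≤ #(h • A') ^ c * #(h • E') := Nat.le_mul_of_pos_right _ (card_pos.mpr hE'.nsmul)

end Amplification

variable (K : Type*) [Fintype K] [DecidableEq K] (n : ℕ)

def Realizable [AddMonoid K] (H N : ℕ) : Prop :=
  ∀ σ : Fin H → Equiv.Perm (Fin n), ∃ A : Fin n → Finset (Fin N → K),
    (∀ j m, H + 1 ≤ m → m • A j = univ) ∧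
      ∀ i : Fin H, StrictMono fun r => #(((i : ℕ) + 1) • A ((σ i).symm r))

theorem realizable_zero [AddMonoid K] : Realizable K n 0 0 :=
  fun _ => ⟨fun _ => univ, fun _ _ hm => nsmul_univ (by omega), fun i => i.elim0⟩

theorem Realizable.succ [Field K] {H N : ℕ} (hN : Realizable K n H N) :
    ∃ N', Realizable K n (H + 1) N' := by
  obtain ⟨c, hc⟩ := exists_pow_mul_lt_pow (Fintype.card (Fin N → K))
    (Fintype.card (Fin n → Fin (H + 2) → K))
  let V := (Fin c → Fin N → K) × (Fin n → Fin (H + 2) → K)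
  let e : V ≃ₗ[K] (Fin (Module.finrank K V) → K) := LinearEquiv.ofFinrankEq _ _ (by simp)
  refine ⟨Module.finrank K V, fun σ => ?_⟩
  obtain ⟨A, hsat, hmono⟩ := hN (Fin.init σ)
  let T : Finset (Fin (H + 2) → K) := coordLines (H + 2)
  have hT_nonempty : T.Nonempty := ⟨0, by simp [T, coordLines]⟩
  have hT_sat (m : ℕ) (hm : H + 2 ≤ m) : m • T = univ := nsmul_coordLines_eq_univ hm
  have hT_unsat : (H + 1) • T ≠ univ := nsmul_coordLines_ne_univ (lt_add_one _)
  let B (j : Fin n) : Finset V := (piFinset fun _ => A j) ×ˢ staircase T (σ (Fin.last H) j)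
  have hcard (h : ℕ) (j : Fin n) : #(h • (B j).image e) = #(h • B j) := by
    rw [← image_nsmul e, card_image_of_injective _ e.injective]
  refine ⟨fun j => (B j).image e, fun j m hm => ?_, fun i => ?_⟩
  · rw [← image_nsmul e, product_nsmul, piFinset_nsmul]
    simp only [hsat j m (by omega), piFinset_univ,
      nsmul_staircase_eq_univ (by omega) (hT_sat m (by omega)), univ_product_univ]
    exact image_univ_of_surjective e.surjective
  · induction i using Fin.lastCases with
    | last =>
      intro r r' hrr'
      dsimp only
      rw [Fin.val_last, hcard, hcard, card_nsmul_piFinset_product, card_nsmul_piFinset_product,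
        hsat _ _ le_rfl, hsat _ _ le_rfl, Equiv.apply_symm_apply, Equiv.apply_symm_apply]
      exact Nat.mul_lt_mul_of_pos_left
        (strictMono_card_nsmul_staircase (by omega) hT_nonempty hT_unsat hrr') (by positivity)
    | cast i =>
      have hA_nonempty (j : Fin n) : (A j).Nonempty := by
        have := hsat j (H + 1) le_rfl ▸ univ_nonempty
        exact nonempty_iff_ne_empty.mpr fun hA => by simp [hA] at this
      intro r r' hrr'
      simp only [Fin.val_castSucc, hcard]
      exact card_nsmul_piFinset_product_lt hc (hA_nonempty _)
        (staircase_nonempty hT_nonempty _) (hmono i hrr')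

theorem exists_realizable [Field K] (H : ℕ) : ∃ N, Realizable K n H N := by
  induction H with
  | zero => exact ⟨0, realizable_zero K n⟩
  | succ H ih =>
    obtain ⟨N, hN⟩ := ih
    exact hN.succ

end SumsetOrder

/-- **Proposition 3 (positive characteristic).** Let `p` be prime and `n, H ≥ 1`.
There exists `N = N_p(n,H)` such that for any permutations `σ_1, …, σ_H` of `{1, …, n}`
there exist subsets `A_1, …, A_n ⊆ (ℤ/pℤ)^N` such that for each `1 ≤ h ≤ H` the
quantities `|hA_1|, …, |hA_n|` have the same relative order as `σ_h`. -/
theorem prop_positive_characteristic (p : ℕ) (hp : p.Prime) (n H : ℕ) :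
    ∃ N : ℕ, ∀ σ : Fin H → Equiv.Perm (Fin n),
      ∃ A : Fin n → Finset (Fin N → ZMod p),
        ∀ h : ℕ, ∀ h1 : 1 ≤ h, ∀ hhH : h ≤ H, ∀ j k : Fin n,
          (h • A j).card < (h • A k).card ↔
            σ ⟨h - 1, by omega⟩ j < σ ⟨h - 1, by omega⟩ k := by
  have : Fact p.Prime := ⟨hp⟩
  obtain ⟨N, hN⟩ := SumsetOrder.exists_realizable (ZMod p) n H
  refine ⟨N, fun σ => ?_⟩
  obtain ⟨A, -, hA⟩ := hN σ
  refine ⟨A, fun h h1 hhH j k => ?_⟩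
  let i : Fin H := ⟨h - 1, by omega⟩
  have hi : (i : ℕ) + 1 = h := Nat.sub_add_cancel h1
  have := (hA i).lt_iff_lt (a := σ i j) (b := σ i k)
  rwa [Equiv.symm_apply_apply, Equiv.symm_apply_apply, hi] at this
end

section
/- Let G be an abelian group, let h, n ≥ 1 be natural numbers, and let B_1, B_2 be finite nonempty subsets of G such that |hB_1| < |hB_2| and |h'B_1| = |h'B_2| for every natural number h' > h. For 1 ≤ i ≤ n, define B'_i ⊆ G^n to be the Cartesian product of (n − i) copies of B_1 with i copies of B_2. Then |hB'_1| < |hB'_2| < ⋯ < |hB'_n|, and for every natural number h' > h the cardinalities |h'B'_1|, …, |h'B'_n| are all equal. -/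
open Pointwise

lemma my_piFinset_nsmul {ι : Type*} {α : ι → Type*} [Fintype ι] [DecidableEq ι]
    [∀ i, DecidableEq (α i)] [∀ i, AddMonoid (α i)] (m : ℕ) (s : ∀ i, Finset (α i)) :
    m • Fintype.piFinset s = Fintype.piFinset (fun i => m • s i) := by
  induction m with
  | zero =>
    simp only [zero_nsmul]
    ext f; simp [Finset.mem_zero, funext_iff]
  | succ k ih =>
    simp_rw [succ_nsmul, ih, Fintype.piFinset_add]

lemma my_nsmul_nonempty {G : Type*} [AddMonoid G] [DecidableEq G] (m : ℕ)
    {B : Finset G} (hB : B.Nonempty) : (m • B).Nonempty := by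
  induction m with
  | zero => simp [zero_nsmul]
  | succ k ih => rw [succ_nsmul]; exact ih.add hB

/-- From two building blocks to `n` building blocks: if `|hB_1| < |hB_2|` and
`|h'B_1| = |h'B_2|` for all `h' > h`, then the Cartesian products
`B'_i := B_1^{×(n-i)} × B_2^{×i} ⊆ G^n` (for `1 ≤ i ≤ n`) satisfy
`|hB'_1| < ⋯ < |hB'_n|` and `|h'B'_1| = ⋯ = |h'B'_n|` for all `h' > h`. -/
theorem two_blocks_to_n_blocks (G : Type*) [AddCommGroup G] [DecidableEq G]
    (h n : ℕ) (hh : 1 ≤ h) (hn : 1 ≤ n)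
    (B₁ B₂ : Finset G) (hB₁ : B₁.Nonempty) (hB₂ : B₂.Nonempty)
    (hlt : (h • B₁).card < (h • B₂).card)
    (heq : ∀ h' : ℕ, h < h' → (h' • B₁).card = (h' • B₂).card)
    (B' : ℕ → Finset (Fin n → G))
    (hB' : ∀ i : ℕ, B' i =
      Fintype.piFinset (fun j : Fin n => if (j : ℕ) < n - i then B₁ else B₂)) :
    (∀ i i' : ℕ, 1 ≤ i → i < i' → i' ≤ n →
      (h • B' i).card < (h • B' i').card) ∧
    (∀ h' : ℕ, h < h' → ∀ i i' : ℕ, 1 ≤ i → i ≤ n → 1 ≤ i' → i' ≤ n →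
      (h' • B' i).card = (h' • B' i').card) := by
  have key : ∀ (m i : ℕ), (m • B' i).card =
      ∏ j : Fin n, (if (j : ℕ) < n - i then (m • B₁).card else (m • B₂).card) := by
    intro m i
    rw [hB' i, my_piFinset_nsmul, Fintype.card_piFinset]
    congr 1
    ext j
    split <;> simp [apply_ite (m • ·), apply_ite Finset.card]
  constructor
  · intro i i' hi hii' hi'n
    rw [key, key]
    have pos1 := Finset.card_pos.mpr (my_nsmul_nonempty h hB₁)
    have pos2 := Finset.card_pos.mpr (my_nsmul_nonempty h hB₂)
    apply Finset.prod_lt_prod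
    · intro j _; split <;> [exact pos1; exact pos2]
    · intro j _
      rcases lt_or_ge (j : ℕ) (n - i') with hj | hj
      · have hj2 : (j : ℕ) < n - i := hj.trans_le (Nat.sub_le_sub_left hii'.le n)
        simp [hj, hj2]
      · rw [if_neg (Nat.not_lt.mpr hj)]
        split
        · exact hlt.le
        · exact le_rfl
    · have h1 : n - i' < n := Nat.sub_lt_self (by omega) hi'n
      refine ⟨⟨n - i', h1⟩, Finset.mem_univ _, ?_⟩
      have h3 : n - i' < n - i := by omega
      simp only [h3, if_pos, lt_irrefl (n - i'), if_neg, not_false_iff]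
      simpa [h3] using hlt
  · intro h' hh' i i' _ _ _ _
    have e := heq h' hh'
    rw [key, key]
    apply Finset.prod_congr rfl
    intro j _
    split <;> split <;> simp [e]
end

section
/- Let p be a prime, let j ≥ 1 be a natural number, and let 0 ≤ s < s' ≤ t be integers with js' ≤ t. Then |jX(s, t)| < |jX(s', t)|, where X(s, t) is the subset of (ℤ/pℤ)^t consisting of all elements with at most s nonzero coordinates and jX denotes the j-fold sumset. -/
open Pointwise

/-- `X p s t` is the set of elements of `(ℤ/pℤ)^t` with at most `s` nonzero
coordinates. -/
def X (p : ℕ) [Fact p.Prime] (s t : ℕ) : Finset (Fin t → ZMod p) :=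
  Finset.univ.filter fun x => (Finset.univ.filter fun i => x i ≠ 0).card ≤ s

namespace XAux

variable {p : ℕ} [Fact p.Prime] {s t : ℕ}

/-- support of a vector -/
def supp {t : ℕ} (x : Fin t → ZMod p) : Finset (Fin t) :=
  Finset.univ.filter fun i => x i ≠ 0

lemma mem_X {x : Fin t → ZMod p} : x ∈ X p s t ↔ (supp x).card ≤ s := by
  simp [X, supp]

lemma supp_add_subset (x y : Fin t → ZMod p) :
    supp (x + y) ⊆ supp x ∪ supp y := by
  intro i hi
  simp only [supp, Finset.mem_filter, Finset.mem_univ, true_and,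
    Finset.mem_union] at *
  by_contra h
  push_neg at h
  simp [Pi.add_apply, h.1, h.2] at hi

lemma card_supp_smul {j : ℕ} (hj : 1 ≤ j) {x : Fin t → ZMod p}
    (hx : x ∈ j • X p s t) : (supp x).card ≤ j * s := by
  induction j generalizing x with
  | zero => omega
  | succ n ih =>
    rcases Nat.eq_zero_or_pos n with rfl | hn
    · rw [one_nsmul] at hx
      simpa [one_mul] using mem_X.mp hx
    · rw [succ_nsmul] at hx
      rcases Finset.mem_add.mp hx with ⟨y, hy, z, hz, rfl⟩
      calc (supp (y + z)).card ≤ (supp y ∪ supp z).card :=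
            Finset.card_le_card (supp_add_subset y z)
        _ ≤ (supp y).card + (supp z).card := Finset.card_union_le _ _
        _ ≤ n * s + s := add_le_add (ih hn hy) (mem_X.mp hz)
        _ = (n + 1) * s := by ring

lemma mem_smul_of_card {j : ℕ} (hj : 1 ≤ j) {x : Fin t → ZMod p}
    (hx : (supp x).card ≤ j * s) : x ∈ j • X p s t := by
  induction j generalizing x with
  | zero => omega
  | succ n ih =>
    rcases Nat.eq_zero_or_pos n with rfl | hn
    · rw [one_nsmul]
      exact mem_X.mpr (by simpa using hx)
    · have hmin : min s (supp x).card ≤ (supp x).card := min_le_right _ _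
      obtain ⟨S, hS, hScard⟩ := Finset.exists_subset_card_eq hmin
      set z : Fin t → ZMod p := fun i => if i ∈ S then x i else 0 with hzdef
      have hzsupp : supp z ⊆ S := by
        intro i hi
        simp only [supp, Finset.mem_filter, Finset.mem_univ, true_and,
          hzdef] at hi
        by_contra h
        simp [h] at hi
      have hz : z ∈ X p s t := mem_X.mpr <| le_trans
        (Finset.card_le_card hzsupp) (by omega)
      have hysupp : supp (x - z) ⊆ supp x \ S := by
        intro i hi
        simp only [supp, Finset.mem_filter, Finset.mem_univ, true_and,
          Pi.sub_apply, hzdef] at hi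
        by_cases hiS : i ∈ S
        · simp [hiS] at hi
        · simp only [hiS, if_false, sub_zero] at hi
          simp [supp, Finset.mem_sdiff, hi, hiS]
      have hycard : (supp (x - z)).card ≤ n * s := by
        have h1 : (supp (x - z)).card ≤ (supp x \ S).card :=
          Finset.card_le_card hysupp
        have h2 : (supp x \ S).card = (supp x).card - S.card :=
          Finset.card_sdiff_of_subset hS
        have hmul : (n + 1) * s = n * s + s := by ring
        rcases le_total s (supp x).card with h | h
        · rw [min_eq_left h] at hScard; omega
        · rw [min_eq_right h] at hScard; omega
      have hy : x - z ∈ n • X p s t := ih hn hycard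
      have : (x - z) + z ∈ n • X p s t + X p s t :=
        Finset.add_mem_add hy hz
      rw [succ_nsmul]
      simpa using this

lemma X_subset_X (h : s ≤ t) (s₂ : ℕ) (hss : s ≤ s₂) :
    X p s t ⊆ X p s₂ t := by
  intro x hx
  exact mem_X.mpr (le_trans (mem_X.mp hx) hss)

lemma X_card_lt {a b : ℕ} (hab : a < b) (hbt : b ≤ t) :
    (X p a t).card < (X p b t).card := by
  apply Finset.card_lt_card
  constructor
  · intro x hx
    exact mem_X.mpr (le_trans (mem_X.mp hx) hab.le)
  · intro hsub
    set w : Fin t → ZMod p := fun i => if (i : ℕ) < a + 1 then 1 else 0 with hw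
    have hsuppw : supp w = Finset.univ.filter fun i : Fin t => (i : ℕ) < a + 1 := by
      ext i
      simp only [supp, Finset.mem_filter, Finset.mem_univ, true_and, hw]
      by_cases h : (i : ℕ) < a + 1 <;> simp [h]
    have hcardw : (supp w).card = a + 1 := by
      rw [hsuppw]
      have hle : a + 1 ≤ t := by omega
      have : (Finset.univ.filter fun i : Fin t => (i : ℕ) < a + 1) =
          Finset.map (Fin.castLEEmb hle) Finset.univ := by
        ext i
        simp only [Finset.mem_filter, Finset.mem_univ, true_and,
          Finset.mem_map, Fin.castLEEmb_apply]
        constructor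
        · intro hi
          exact ⟨⟨(i : ℕ), hi⟩, rfl⟩
        · rintro ⟨k, -, rfl⟩
          simpa using k.isLt
      rw [this, Finset.card_map, Finset.card_univ, Fintype.card_fin]
    have hwb : w ∈ X p b t := mem_X.mpr (by omega)
    have hwa : w ∈ X p a t := hsub hwb
    have := mem_X.mp hwa
    omega

end XAux

/-- For `j ≥ 1` and `0 ≤ s < s' ≤ t` with `js' ≤ t`, we have
`|jX(s,t)| < |jX(s',t)|`. -/
theorem jfold_sumset_X_strict_mono (p : ℕ) [Fact p.Prime] (j : ℕ) (hj : 1 ≤ j)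
    (s s' t : ℕ) (hss' : s < s') (hs't : s' ≤ t) (hjs' : j * s' ≤ t) :
    (j • X p s t).card < (j • X p s' t).card := by
  have hjs : j * s < j * s' := Nat.mul_lt_mul_of_pos_left hss' (by omega)
  have h1 : (j • X p s t).card ≤ (X p (j * s) t).card := by
    apply Finset.card_le_card
    intro x hx
    exact XAux.mem_X.mpr (XAux.card_supp_smul hj hx)
  have h2 : (X p (j * s) t).card < (X p (j * s') t).card :=
    XAux.X_card_lt hjs hjs'
  have h3 : (X p (j * s') t).card ≤ (j • X p s' t).card := by
    apply Finset.card_le_card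
    intro x hx
    exact XAux.mem_smul_of_card hj (XAux.mem_X.mp hx)
  omega
end

section
/- Let 0 ≤ u ≤ v be integers and define Y(u, v) := [0, u] ∪ [v − u, v] ⊆ ℤ. Then for every natural number j ≥ 1, the j-fold sumset satisfies jY(u, v) = ⋃_{ℓ=0}^{j} [ℓ(v − u), ℓ(v − u) + ju]. -/
/-!
Expanding `j • (A ∪ B)` like a binomial power gives the union, over `a + b = j`, of `a • A + b • B`.
Sums and multiples of integer intervals are again intervals, so the `ℓ`-th term
`(j - ℓ) • [0, u] + ℓ • [v - u, v]` is exactly `[ℓ (v - u), ℓ (v - u) + j u]`.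
-/

open Pointwise

/-- `Y u v = [0, u] ∪ [v − u, v] ⊆ ℤ`. -/
noncomputable def Y (u v : ℤ) : Finset ℤ := Finset.Icc 0 u ∪ Finset.Icc (v - u) v

namespace Finset

section Union

variable {α ι : Type*} [DecidableEq α]

theorem biUnion_add [Add α] (B : Finset ι) (f : ι → Finset α) (r : Finset α) :
    B.biUnion f + r = B.biUnion fun i => f i + r := by
  ext x
  simp only [mem_add, mem_biUnion]
  aesop

theorem nsmul_union_eq_biUnion_antidiagonal [AddCommMonoid α] (s t : Finset α) (n : ℕ) :
    n • (s ∪ t) = (antidiagonal n).biUnion fun p => p.1 • s + p.2 • t := by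
  induction n with
  | zero => simp
  | succ n ih =>
    have step (a b : ℕ) :
        a • s + b • t + (s ∪ t) = ((a + 1) • s + b • t) ∪ (a • s + (b + 1) • t) := by
      rw [add_union, succ_nsmul, succ_nsmul]
      congr 1 <;> abel
    ext x
    simp only [succ_nsmul _ n, ih, biUnion_add, step, mem_biUnion,
      HasAntidiagonal.mem_antidiagonal, mem_union, Prod.exists]
    constructor
    · rintro ⟨a, b, hab, hx | hx⟩
      · exact ⟨a + 1, b, by omega, hx⟩
      · exact ⟨a, b + 1, by omega, hx⟩
    · rintro ⟨_ | a, b, hab, hx⟩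
      · obtain rfl : b = n + 1 := by omega
        exact ⟨0, n, by omega, .inr hx⟩
      · exact ⟨a, b, by omega, .inl hx⟩

end Union

section Interval

variable {α : Type*} [DecidableEq α] [AddCommGroup α] [LinearOrder α] [IsOrderedAddMonoid α]
  [LocallyFiniteOrder α]

theorem Icc_add_Icc {a b c d : α} (hab : a ≤ b) (hcd : c ≤ d) :
    Icc a b + Icc c d = Icc (a + c) (b + d) := by
  refine (Icc_add_Icc_subset a b c d).antisymm fun x hx => ?_
  obtain ⟨hacx, hxbd⟩ := mem_Icc.1 hx
  refine mem_add.2 ⟨x - max c (x - b), ?_, max c (x - b), ?_, sub_add_cancel _ _⟩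
  · rw [mem_Icc, le_sub_comm, sub_le_comm]
    exact ⟨max_le (le_sub_iff_add_le'.2 hacx) (sub_le_sub_left hab x), le_max_right _ _⟩
  · rw [mem_Icc]
    exact ⟨le_max_left _ _, max_le hcd (sub_le_iff_le_add'.2 hxbd)⟩

theorem nsmul_Icc {a b : α} (hab : a ≤ b) (n : ℕ) : n • Icc a b = Icc (n • a) (n • b) := by
  induction n with
  | zero => simp [← singleton_zero]
  | succ n ih =>
    rw [succ_nsmul, ih, Icc_add_Icc (nsmul_le_nsmul_right hab n) hab, succ_nsmul, succ_nsmul]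

end Interval

end Finset

theorem jfold_sumset_Y_general (u v : ℤ) (hu : 0 ≤ u) (j : ℕ) :
    j • Y u v =
      (Finset.range (j + 1)).biUnion fun ℓ =>
        Finset.Icc ((ℓ : ℤ) * (v - u)) ((ℓ : ℤ) * (v - u) + (j : ℤ) * u) := by
  have hblock {ℓ : ℕ} (hℓ : ℓ ∈ Finset.range (j + 1)) :
      (j - ℓ) • Finset.Icc 0 u + ℓ • Finset.Icc (v - u) v =
        Finset.Icc ((ℓ : ℤ) * (v - u)) ((ℓ : ℤ) * (v - u) + (j : ℤ) * u) := by
    have hℓj : ℓ ≤ j := Nat.lt_succ_iff.1 (Finset.mem_range.1 hℓ)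
    rw [Finset.nsmul_Icc hu, Finset.nsmul_Icc (sub_le_self v hu), Finset.Icc_add_Icc
      (nsmul_le_nsmul_right hu _) (nsmul_le_nsmul_right (sub_le_self v hu) _)]
    congr 1
    · simp
    · simp only [nsmul_eq_mul, Nat.cast_sub hℓj]
      ring
  rw [Y, Finset.nsmul_union_eq_biUnion_antidiagonal, Finset.Nat.antidiagonal_eq_image',
    Finset.image_biUnion]
  exact Finset.biUnion_congr rfl fun ℓ hℓ => hblock hℓ

/-- For integers `0 ≤ u ≤ v` and every `j ≥ 1`, the `j`-fold sumset satisfies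
`jY(u,v) = ⋃_{ℓ=0}^{j} [ℓ(v−u), ℓ(v−u) + ju]`. -/
theorem jfold_sumset_Y (u v : ℤ) (hu : 0 ≤ u) (huv : u ≤ v) (j : ℕ) (hj : 1 ≤ j) :
    j • Y u v =
      (Finset.range (j + 1)).biUnion fun ℓ =>
        Finset.Icc ((ℓ : ℤ) * (v - u)) ((ℓ : ℤ) * (v - u) + (j : ℤ) * u) :=
  jfold_sumset_Y_general u v hu j
end

section
/- Let j ≥ 1 be a natural number and let 0 ≤ u < u' ≤ v be integers with (j + 1)u' ≤ v. Then the j-fold sumset jY(u, v) is strictly contained in jY(u', v); in particular, the element ju' belongs to jY(u', v) but not to jY(u, v). -/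
open Pointwise

/-! Every element of `jY(u, v)` lies either in `[0, ju]` or in `[v − u, ∞)`: a sum avoiding the
top block stays below `ju`, and once a summand from the top block is used, the remaining
(nonnegative) summands can only push it further up. So for `(j + 1)u' ≤ v` the value `ju'` falls
into the gap `(ju, v − u)`, while it is plainly the sum of `j` copies of `u' ∈ Y(u', v)`. -/

lemma Finset.nonneg_of_mem_nsmul {α : Type*} [AddCommMonoid α] [PartialOrder α]
    [IsOrderedAddMonoid α] [DecidableEq α] {s : Finset α} (hs : ∀ a ∈ s, 0 ≤ a) :
    ∀ (n : ℕ), ∀ x ∈ n • s, 0 ≤ x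
  | 0, x, hx => by rw [zero_nsmul, Finset.mem_zero] at hx; exact hx.ge
  | n + 1, _, hx => by
    rw [succ_nsmul] at hx
    obtain ⟨y, hy, a, ha, rfl⟩ := Finset.mem_add.1 hx
    exact add_nonneg (nonneg_of_mem_nsmul hs n y hy) (hs a ha)

section Y

variable {u u' v x : ℤ}

lemma mem_Y : x ∈ Y u v ↔ 0 ≤ x ∧ x ≤ u ∨ v - u ≤ x ∧ x ≤ v := by
  simp only [Y, Finset.mem_union, Finset.mem_Icc]

lemma Y_subset_Y (huu' : u ≤ u') : Y u v ⊆ Y u' v := fun x hx => by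
  rw [mem_Y] at hx ⊢
  omega

lemma self_mem_Y (hu : 0 ≤ u) : u ∈ Y u v := mem_Y.2 (Or.inl ⟨hu, le_rfl⟩)

lemma nonneg_of_mem_Y (huv : u ≤ v) (hx : x ∈ Y u v) : 0 ≤ x := by
  rw [mem_Y] at hx
  omega

lemma le_or_le_of_mem_nsmul_Y (huv : u ≤ v) (j : ℕ) (hx : x ∈ j • Y u v) :
    x ≤ j * u ∨ v - u ≤ x := by
  induction j generalizing x with
  | zero =>
    rw [zero_nsmul, Finset.mem_zero] at hx
    simp [hx]
  | succ n ih =>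
    rw [succ_nsmul] at hx
    obtain ⟨y, hy, a, ha, rfl⟩ := Finset.mem_add.1 hx
    have hy0 := Finset.nonneg_of_mem_nsmul (fun _ => nonneg_of_mem_Y huv) n y hy
    have ha0 := nonneg_of_mem_Y huv ha
    push_cast
    rw [mem_Y] at ha
    rcases ih hy with hy | hy
    · rcases ha with ha | ha
      · left; linarith
      · right; linarith
    · right; linarith

end Y

theorem jfold_sumset_Y_strict_subset_general (j : ℕ) (hj : 1 ≤ j) (u u' v : ℤ)
    (hu : 0 ≤ u) (huu' : u < u') (hju : ((j : ℤ) + 1) * u' ≤ v) :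
    j • Y u v ⊂ j • Y u' v ∧
    (j : ℤ) * u' ∈ j • Y u' v ∧ (j : ℤ) * u' ∉ j • Y u v := by
  have hu' : 0 ≤ u' := by linarith
  have huv : u ≤ v := by nlinarith
  have hmem : (j : ℤ) * u' ∈ j • Y u' v := by
    simpa using Finset.nsmul_mem_nsmul (n := j) (self_mem_Y (v := v) hu')
  have hnot : (j : ℤ) * u' ∉ j • Y u v := fun h => by
    have hlow : (j : ℤ) * u < j * u' := mul_lt_mul_of_pos_left huu' (by omega)
    have hhigh : (j : ℤ) * u' < v - u := by linarith
    rcases le_or_le_of_mem_nsmul_Y huv j h with h | h <;> linarith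
  exact ⟨⟨Finset.nsmul_subset_nsmul_left (Y_subset_Y huu'.le), fun h => hnot (h hmem)⟩, hmem, hnot⟩

/-- For `j ≥ 1` and integers `0 ≤ u < u' ≤ v` with `(j+1)u' ≤ v`, the `j`-fold sumset
`jY(u,v)` is strictly contained in `jY(u',v)`; in particular `ju'` lies in `jY(u',v)`
but not in `jY(u,v)`. -/
theorem jfold_sumset_Y_strict_subset (j : ℕ) (hj : 1 ≤ j) (u u' v : ℤ)
    (hu : 0 ≤ u) (huu' : u < u') (hu'v : u' ≤ v) (hju : ((j : ℤ) + 1) * u' ≤ v) :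
    j • Y u v ⊂ j • Y u' v ∧
    (j : ℤ) * u' ∈ j • Y u' v ∧ (j : ℤ) * u' ∉ j • Y u v :=
  jfold_sumset_Y_strict_subset_general j hj u u' v hu huu' hju
end

section
/- Let n, R ≥ 1 be natural numbers. Then there exist natural numbers h_1 < h_2 < ⋯ < h_R such that the following holds: for any permutations σ_1, …, σ_R of {1, …, n}, there exist finite nonempty subsets A_1, …, A_n of ℤ such that for each 1 ≤ r ≤ R and all 1 ≤ j, k ≤ n, one has |h_r A_j| < |h_r A_k| if and only if σ_r(j) < σ_r(k). -/
/-
Take `h_r = r`. For `a : ℕ^R`, the level-one cone `{0} ∪ ⋃_s {(e_s, t e_s) : t ≤ a_s}` in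
`ℕ^R × ℕ^R` has as `h`-fold sumset the cone `{(i, y) : ∑ i ≤ h, y ≤ i * a}`, which has
`∑_{∑ i ≤ h} ∏_s (i_s a_s + 1)` points. For `a_s = Q ^ 2 ^ s + d_s` with `Q` huge this count is a
base-`Q` expansion whose digits are indexed by sets `U` of directions. At level `h = r + 1` the
digits of the sets with more than `r` elements do not depend on `d`, and every other set has a
smaller exponent than the set `U*` of the `r` heaviest directions, whose digit is a constant plus
the sum of `d` over the remaining directions. Choosing each `d_s` as one digit of a second
expansion makes these partial sums rank like `σ_r`, simultaneously for all `r`. Finally, an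
additive map `ℤ^{2R} → ℤ` that is injective on the finitely many cones involved turns them into
sets of integers with the same sumset sizes.
-/

open Finset Pointwise

theorem exists_addMonoidHom_injOn {M κ : Type*} [AddCommMonoid M] [Fintype κ]
    (e : M →+ κ → ℤ) (he : Function.Injective e) (F : Finset M) :
    ∃ φ : M →+ ℤ, Set.InjOn φ F := by
  classical
  let k : κ ↪ ℕ := (Fintype.equivFin κ).toEmbedding.trans Fin.valEmbedding
  let P : M →+ Polynomial ℤ :=
    ∑ i, (Polynomial.monomial (k i)).toAddMonoidHom.comp ((Pi.evalAddMonoidHom _ i).comp e)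
  have hP : Function.Injective P := by
    intro v w hvw
    refine he (funext fun i => ?_)
    have hcoeff : ∀ v, (P v).coeff (k i) = e v i := fun v => by
      simp [P, Polynomial.coeff_monomial, k.injective.eq_iff]
    rw [← hcoeff, ← hcoeff, hvw]
  -- evaluation at an integer that is a root of no `P v - P w` with `v ≠ w` in `F` separates `F`
  obtain ⟨t, ht⟩ := Infinite.exists_notMem_finset
    (((F ×ˢ F).filter fun p => p.1 ≠ p.2).biUnion fun p => (P p.1 - P p.2).roots.toFinset)
  refine ⟨(Polynomial.evalRingHom t).toAddMonoidHom.comp P, fun v hv w hw hvw => ?_⟩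
  by_contra hne
  have hsub : P v - P w ≠ 0 := sub_ne_zero.2 (hP.ne hne)
  refine ht (mem_biUnion.2 ⟨(v, w), by simp_all, ?_⟩)
  simp only [Multiset.mem_toFinset, Polynomial.mem_roots hsub, Polynomial.IsRoot,
    Polynomial.eval_sub]
  simpa [sub_eq_zero] using hvw

theorem exists_addMonoidHom_injOn_prod {ι : Type*} [Fintype ι] (F : Finset ((ι → ℕ) × (ι → ℕ))) :
    ∃ φ : (ι → ℕ) × (ι → ℕ) →+ ℤ, Set.InjOn φ F :=
  exists_addMonoidHom_injOn
    (((Nat.castAddMonoidHom ℤ).compLeft _).comp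
      (RingEquiv.sumArrowEquivProdArrow ι ι ℕ).symm.toAddMonoidHom)
    (fun _ _ hpq => (RingEquiv.sumArrowEquivProdArrow _ _ ℕ).symm.injective
      (funext fun x => Nat.cast_injective (congrFun hpq x)))
    F

-- The exponents `E` may repeat, hence the bound `#s * C < B` rather than `C < B`.
theorem sum_mul_pow_lt_sum_mul_pow {ι : Type*} [DecidableEq ι] {s : Finset ι} {c c' E : ι → ℕ}
    {B C : ℕ} {u : ι} (hu : u ∈ s) (hcC : ∀ v ∈ s, c v ≤ C) (hB : #s * C < B)
    (hcu : c u < c' u) (hc : ∀ v ∈ s, v ≠ u → E v < E u ∨ c v ≤ c' v) :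
    ∑ v ∈ s, c v * B ^ E v < ∑ v ∈ s, c' v * B ^ E v := by
  set low := (s.erase u).filter fun v => E v < E u
  have hlow : ∑ v ∈ low, C * B ^ E v < B ^ E u := by
    have hB0 : 0 < B := by omega
    refine Nat.lt_of_mul_lt_mul_right (a := B) ?_
    calc (∑ v ∈ low, C * B ^ E v) * B ≤ ∑ v ∈ low, C * B ^ E u := by
          rw [sum_mul]
          refine sum_le_sum fun v hv => ?_
          rw [mul_assoc, ← pow_succ]
          exact Nat.mul_le_mul_left _ (Nat.pow_le_pow_right hB0 (mem_filter.1 hv).2)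
      _ ≤ #s * C * B ^ E u := by
          rw [sum_const, smul_eq_mul, ← mul_assoc]
          exact Nat.mul_le_mul_right _ (Nat.mul_le_mul_right _
            ((card_filter_le _ _).trans (card_erase_le)))
      _ < B ^ E u * B := by
          rw [mul_comm (B ^ _)]
          exact Nat.mul_lt_mul_of_pos_right hB (by positivity)
  have hrest : ∑ v ∈ s.erase u, c v * B ^ E v
      ≤ ∑ v ∈ s.erase u, c' v * B ^ E v + ∑ v ∈ low, C * B ^ E v := by
    rw [sum_filter, ← sum_add_distrib]
    refine sum_le_sum fun v hv => ?_
    obtain ⟨hvu, hvs⟩ := mem_erase.1 hv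
    split_ifs with hE
    · exact le_add_left (Nat.mul_le_mul_right _ (hcC v hvs))
    · have := (hc v hvs hvu).resolve_left hE
      simpa using Nat.mul_le_mul_right (B ^ E v) this
  rw [← add_sum_erase s _ hu, ← add_sum_erase s _ hu]
  calc c u * B ^ E u + ∑ v ∈ s.erase u, c v * B ^ E v
      < (c u + 1) * B ^ E u + ∑ v ∈ s.erase u, c' v * B ^ E v := by nlinarith
    _ ≤ c' u * B ^ E u + ∑ v ∈ s.erase u, c' v * B ^ E v := by gcongr; omega

theorem sum_Iic_mul_pow_lt_of_lt {R C : ℕ} {x x' : Fin R → ℕ} (hx : ∀ s, x s ≤ C) {t : Fin R}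
    (ht : x t < x' t) :
    ∑ s ∈ Iic t, x s * (R * C + 1) ^ (s : ℕ) < ∑ s ∈ Iic t, x' s * (R * C + 1) ^ (s : ℕ) :=
  sum_mul_pow_lt_sum_mul_pow (E := Fin.val) (mem_Iic.2 le_rfl) (fun s _ => hx s)
    (Nat.lt_succ_of_le (Nat.mul_le_mul_right _ ((card_le_univ _).trans (by simp)))) ht
    fun _ hs hne => .inl (lt_of_le_of_ne (Fin.le_def.1 (mem_Iic.1 hs)) (Fin.val_ne_of_ne hne))

theorem Finset.toColex_lt_toColex_of_isUpperSet {α : Type*} [LinearOrder α] {U V : Finset α}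
    (hV : IsUpperSet (V : Set α)) (hcard : #U ≤ #V) (hne : U ≠ V) : toColex U < toColex V := by
  obtain ⟨a, haV, haU⟩ : ∃ a ∈ V, a ∉ U := by
    by_contra! hVU
    exact hne (eq_of_subset_of_card_le hVU hcard).symm
  exact Colex.toColex_lt_toColex_iff_exists_forall_lt.2
    ⟨a, haV, haU, fun b _ hbV => lt_of_not_ge fun hab => hbV (hV hab haV)⟩

theorem Fin.sum_two_pow_lt_of_toColex_lt {R : ℕ} {U V : Finset (Fin R)}
    (h : toColex U < toColex V) : ∑ s ∈ U, 2 ^ (s : ℕ) < ∑ s ∈ V, 2 ^ (s : ℕ) := by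
  have hval : ∀ W : Finset (Fin R), ∑ s ∈ W, 2 ^ (s : ℕ) = ∑ k ∈ W.image Fin.val, 2 ^ k :=
    fun W => (sum_image fun _ _ _ _ => Fin.ext).symm
  rw [hval, hval, geomSum_lt_geomSum_iff_toColex_lt_toColex le_rfl,
    Colex.toColex_image_lt_toColex_image Fin.val_strictMono]
  exact h

theorem Finset.card_le_sum_of_prod_ne_zero {κ : Type*} {S : Finset κ} {i : κ → ℕ}
    (h : ∏ s ∈ S, i s ≠ 0) : #S ≤ ∑ s ∈ S, i s := by
  simpa using card_nsmul_le_sum S i 1 fun s hs =>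
    Nat.one_le_iff_ne_zero.2 (prod_ne_zero_iff.1 h s hs)

theorem Finset.prod_mul_add_one_of_sum_le_one {κ : Type*} [DecidableEq κ] {S : Finset κ}
    {x y : κ → ℕ} (hx : ∑ t ∈ S, x t ≤ 1) : ∏ t ∈ S, (x t * y t + 1) = 1 + ∑ t ∈ S, x t * y t := by
  induction S using Finset.induction_on with
  | empty => simp
  | insert a S ha ih =>
    rw [sum_insert ha] at hx
    rw [prod_insert ha, sum_insert ha, ih (by omega)]
    rcases Nat.eq_zero_or_pos (x a) with hxa | hxa
    · simp [hxa]
    · have : ∑ t ∈ S, x t * y t = 0 :=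
        sum_eq_zero fun t ht => by simp [sum_eq_zero_iff.1 (by omega : ∑ t ∈ S, x t = 0) t ht]
      rw [this]
      ring

namespace SumsetOrder

variable {ι : Type*} [Fintype ι] [DecidableEq ι]

def simplex (h : ℕ) : Finset (ι → ℕ) := (Iic fun _ => h).filter fun i => ∑ s, i s ≤ h

@[simp] theorem mem_simplex {h : ℕ} {i : ι → ℕ} : i ∈ simplex h ↔ ∑ s, i s ≤ h := by
  simp only [simplex, mem_filter, mem_Iic, and_iff_right_iff_imp]
  exact fun hi s => (single_le_sum (fun s _ => Nat.zero_le (i s)) (mem_univ s)).trans hi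

def cone (a : ι → ℕ) (h : ℕ) : Finset ((ι → ℕ) × (ι → ℕ)) :=
  (simplex h).biUnion fun i => {i} ×ˢ Iic (i * a)

@[simp] theorem mem_cone {a : ι → ℕ} {h : ℕ} {p : (ι → ℕ) × (ι → ℕ)} :
    p ∈ cone a h ↔ ∑ s, p.1 s ≤ h ∧ p.2 ≤ p.1 * a := by
  obtain ⟨i, y⟩ := p
  simp [cone]

theorem card_cone (a : ι → ℕ) (h : ℕ) :
    #(cone a h) = ∑ i ∈ simplex h, ∏ s, (i s * a s + 1) := by
  rw [cone, card_biUnion]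
  · refine sum_congr rfl fun i _ => ?_
    simp [Pi.card_Iic]
  · exact fun i _ i' _ hii' => disjoint_product.2 (.inl (disjoint_singleton.2 hii'))

theorem cone_zero (a : ι → ℕ) : cone a 0 = 0 := by
  ext ⟨i, y⟩
  simp only [mem_cone, nonpos_iff_eq_zero, sum_eq_zero_iff, mem_univ, true_implies, mem_zero,
    Prod.mk_eq_zero]
  constructor
  · rintro ⟨hi, hy⟩
    obtain rfl : i = 0 := funext hi
    exact ⟨rfl, by simpa using hy⟩
  · rintro ⟨rfl, rfl⟩
    simp

theorem exists_add_of_sum_le_succ {i : ι → ℕ} {h : ℕ} (hi : ∑ s, i s ≤ h + 1) :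
    ∃ i₁ i₂ : ι → ℕ, ∑ s, i₁ s ≤ h ∧ ∑ s, i₂ s ≤ 1 ∧ i = i₁ + i₂ := by
  by_cases hi' : ∑ s, i s ≤ h
  · exact ⟨i, 0, hi', by simp, by simp⟩
  obtain ⟨s, -, hs⟩ := exists_ne_zero_of_sum_ne_zero (by omega : ∑ s, i s ≠ 0)
  have hsplit : i = (i - Pi.single s 1) + Pi.single s 1 := by
    ext s'
    by_cases h : s' = s <;> simp [h]; omega
  refine ⟨i - Pi.single s 1, Pi.single s 1, ?_, by simp, hsplit⟩
  have := congrArg (fun i : ι → ℕ => ∑ s, i s) hsplit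
  simp only [Pi.add_apply, sum_add_distrib, sum_pi_single', mem_univ, if_true] at this
  omega

theorem cone_add_cone_one (a : ι → ℕ) (h : ℕ) : cone a h + cone a 1 = cone a (h + 1) := by
  ext ⟨i, y⟩
  simp only [mem_add, mem_cone, Prod.exists, Prod.mk_add_mk, Prod.mk.injEq]
  constructor
  · rintro ⟨i₁, y₁, ⟨hi₁, hy₁⟩, i₂, y₂, ⟨hi₂, hy₂⟩, rfl, rfl⟩
    refine ⟨?_, ?_⟩
    · simp only [Pi.add_apply, sum_add_distrib]; omega
    · rw [add_mul]; exact add_le_add hy₁ hy₂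
  · rintro ⟨hi, hy⟩
    obtain ⟨i₁, i₂, hi₁, hi₂, rfl⟩ := exists_add_of_sum_le_succ hi
    refine ⟨i₁, y ⊓ i₁ * a, ⟨hi₁, inf_le_right⟩, i₂, y - y ⊓ i₁ * a, ⟨hi₂, fun s => ?_⟩, rfl,
      (add_tsub_cancel_of_le inf_le_left)⟩
    have := hy s
    simp only [Pi.mul_apply, Pi.add_apply, Pi.sub_apply, Pi.inf_apply, add_mul] at this ⊢
    omega

theorem nsmul_cone_one (a : ι → ℕ) : ∀ h : ℕ, h • cone a 1 = cone a h
  | 0 => by rw [zero_nsmul, cone_zero]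
  | h + 1 => by rw [succ_nsmul, nsmul_cone_one a h, cone_add_cone_one]

def coeff (d : ι → ℕ) (h : ℕ) (U : Finset ι) : ℕ :=
  ∑ i ∈ simplex h, (∏ s ∈ U, i s) * ∏ s ∈ Uᶜ, (i s * d s + 1)

theorem card_cone_add (T d : ι → ℕ) (h : ℕ) :
    #(cone (T + d) h) = ∑ U, coeff d h U * ∏ s ∈ U, T s := by
  simp only [card_cone, coeff, sum_mul]
  rw [sum_comm]
  refine sum_congr rfl fun i _ => ?_
  calc ∏ s, (i s * (T + d) s + 1) = ∏ s, (i s * T s + (i s * d s + 1)) :=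
        prod_congr rfl fun s _ => by simp only [Pi.add_apply]; ring
    _ = _ := by
        simp only [prod_add, powerset_univ, ← compl_eq_univ_sdiff, prod_mul_distrib]
        exact sum_congr rfl fun U _ => by ring

theorem eq_indicator_of_prod_ne_zero {S : Finset ι} {i : ι → ℕ} {h : ℕ} (hi : ∑ s, i s ≤ h)
    (hS : h ≤ #S) (hprod : ∏ s ∈ S, i s ≠ 0) : i = fun s => if s ∈ S then 1 else 0 := by
  have hcard := card_le_sum_of_prod_ne_zero hprod
  have hsplit := sum_add_sum_compl S i
  have hS1 : ∀ s ∈ S, i s = 1 := by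
    have := (sum_eq_sum_iff_of_le (s := S) (f := fun _ => 1) (g := i) fun s hs =>
      Nat.one_le_iff_ne_zero.2 (prod_ne_zero_iff.1 hprod s hs)).1 (by simp; omega)
    exact fun s hs => (this s hs).symm
  have hSc : ∀ s ∈ Sᶜ, i s = 0 := sum_eq_zero_iff.1 (by omega)
  ext s
  by_cases hs : s ∈ S
  · simp [hs, hS1 s hs]
  · simp [hs, hSc s (mem_compl.2 hs)]

theorem sum_simplex_prod_eq_one {S : Finset ι} {h : ℕ} (hS : #S = h) :
    ∑ i ∈ simplex h, ∏ s ∈ S, i s = 1 := by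
  rw [sum_eq_single_of_mem (fun s => if s ∈ S then 1 else 0)]
  · exact prod_eq_one fun s hs => if_pos hs
  · simp [hS]
  · intro i hi hne
    by_contra hprod
    exact hne (eq_indicator_of_prod_ne_zero (mem_simplex.1 hi) hS.ge hprod)

theorem coeff_eq_of_le_card (d d' : ι → ℕ) {h : ℕ} {U : Finset ι} (hU : h ≤ #U) :
    coeff d h U = coeff d' h U := by
  refine sum_congr rfl fun i hi => ?_
  by_cases hprod : ∏ s ∈ U, i s = 0
  · simp [hprod]
  · have hi₀ := eq_indicator_of_prod_ne_zero (mem_simplex.1 hi) hU hprod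
    have : ∀ d : ι → ℕ, ∏ s ∈ Uᶜ, (i s * d s + 1) = 1 := fun d =>
      prod_eq_one fun s hs => by simp [hi₀, mem_compl.1 hs]
    rw [this, this]

theorem coeff_of_card_add_one (d : ι → ℕ) {h : ℕ} {U : Finset ι} (hU : #U + 1 = h) :
    coeff d h U = coeff 0 h U + ∑ t ∈ Uᶜ, d t := by
  have hterm : ∀ i ∈ simplex h, (∏ s ∈ U, i s) * ∏ s ∈ Uᶜ, (i s * d s + 1)
      = ∏ s ∈ U, i s + ∑ t ∈ Uᶜ, d t * ∏ s ∈ insert t U, i s := by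
    intro i hi
    by_cases hprod : ∏ s ∈ U, i s = 0
    · obtain ⟨a, ha, hia⟩ := prod_eq_zero_iff.1 hprod
      simp [hprod, prod_eq_zero (mem_insert_of_mem ha) hia]
    · have hcard := card_le_sum_of_prod_ne_zero hprod
      have hsplit := sum_add_sum_compl U i
      rw [prod_mul_add_one_of_sum_le_one (by have := mem_simplex.1 hi; omega), mul_add, mul_one,
        mul_sum]
      congr 1
      refine sum_congr rfl fun t ht => ?_
      rw [prod_insert (mem_compl.1 ht)]
      ring
  rw [coeff, sum_congr rfl hterm, sum_add_distrib, sum_comm]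
  simp only [← mul_sum]
  congr 1
  · simp [coeff]
  · refine sum_congr rfl fun t ht => ?_
    rw [sum_simplex_prod_eq_one (by rw [card_insert_of_notMem (mem_compl.1 ht), hU]), mul_one]

theorem card_cone_lt_card_cone {R : ℕ} (r : Fin R) {Q C : ℕ} {d d' : Fin R → ℕ}
    (hC : ∀ U, coeff d (r + 1) U ≤ C) (hQ : 2 ^ R * C < Q)
    (hd : ∑ s ∈ Iic r.rev, d s < ∑ s ∈ Iic r.rev, d' s) :
    #(cone ((fun s : Fin R => Q ^ 2 ^ (s : ℕ)) + d) (r + 1))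
      < #(cone ((fun s : Fin R => Q ^ 2 ^ (s : ℕ)) + d') (r + 1)) := by
  have htop : #(Ioi r.rev) + 1 = r + 1 := by simp [Fin.card_Ioi]; omega
  have hcompl : (Ioi r.rev)ᶜ = Iic r.rev := by ext; simp
  simp only [card_cone_add, prod_pow_eq_pow_sum]
  refine sum_mul_pow_lt_sum_mul_pow (mem_univ (Ioi r.rev)) (fun U _ => hC U) (by simpa using hQ)
    ?_ fun U _ hU => ?_
  · rw [coeff_of_card_add_one d htop, coeff_of_card_add_one d' htop, hcompl]
    omega
  by_cases hcard : r + 1 ≤ #U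
  · exact .inr (coeff_eq_of_le_card d d' hcard).le
  refine .inl (Fin.sum_two_pow_lt_of_toColex_lt (toColex_lt_toColex_of_isUpperSet ?_ ?_ hU))
  · intro a b hab ha
    simp only [coe_Ioi, Set.mem_Ioi] at ha ⊢
    exact ha.trans_le hab
  · omega

end SumsetOrder

open SumsetOrder in
theorem exists_h_sequence_integers_general (n R : ℕ) :
    ∃ h : Fin R → ℕ, StrictMono h ∧ (∀ r, 1 ≤ h r) ∧
      ∀ σ : Fin R → Equiv.Perm (Fin n),
        ∃ A : Fin n → Finset ℤ,
          (∀ k, (A k).Nonempty) ∧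
          ∀ r : Fin R, ∀ j k : Fin n,
            (h r • A j).card < (h r • A k).card ↔ σ r j < σ r k := by
  refine ⟨fun r => r + 1, fun r r' h => by simpa using h, fun r => by simp, fun σ => ?_⟩
  -- the digit of `d j` at `s` is `σ s.rev j`, so that the leading digit of `d j` on `Iic r.rev`,
  -- the complement of the `r` heaviest directions, is `σ r j`
  let d : Fin n → Fin R → ℕ := fun j s => σ s.rev j * (R * n + 1) ^ (s : ℕ)
  obtain ⟨C, hC⟩ := Finite.exists_le fun p : Fin n × Fin R × Finset (Fin R) =>
    coeff (d p.1) (p.2.1 + 1) p.2.2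
  let a : Fin n → Fin R → ℕ := fun j => (fun s : Fin R => (2 ^ R * C + 1) ^ 2 ^ (s : ℕ)) + d j
  obtain ⟨φ, hφ⟩ :=
    exists_addMonoidHom_injOn_prod (univ.biUnion fun p : Fin n × Fin R => cone (a p.1) (p.2 + 1))
  have hcard (j : Fin n) (r : Fin R) :
      #((r + 1 : ℕ) • (cone (a j) 1).image φ) = #(cone (a j) (r + 1)) := by
    rw [← image_nsmul, nsmul_cone_one, card_image_of_injOn
      (hφ.mono fun p hp => mem_biUnion.2 ⟨(j, r), mem_univ _, hp⟩)]
  refine ⟨fun j => (cone (a j) 1).image φ, fun j => ⟨φ 0, mem_image_of_mem _ (by simp)⟩,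
    fun r j k => ?_⟩
  have hmono : StrictMono fun x => #(cone (a ((σ r).symm x)) (r + 1)) := fun x y hxy =>
    card_cone_lt_card_cone r (fun U => hC (_, r, U)) (Nat.lt_succ_self _)
      (sum_Iic_mul_pow_lt_of_lt (fun s => (σ s.rev _).isLt.le) (by simpa using hxy))
  simpa [hcard] using hmono.lt_iff_lt (a := σ r j) (b := σ r k)

/-- **Theorem (alternative approach).** For all `n, R ≥ 1` there exist natural numbers
`h_1 < ⋯ < h_R` such that for any permutations `σ_1, …, σ_R` of `{1, …, n}` there exist
finite nonempty subsets `A_1, …, A_n ⊆ ℤ` with `|h_r A_1|, …, |h_r A_n|` in the same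
relative order as `σ_r` for each `1 ≤ r ≤ R`. -/
theorem exists_h_sequence_integers (n R : ℕ) (hn : 1 ≤ n) (hR : 1 ≤ R) :
    ∃ h : Fin R → ℕ, StrictMono h ∧ (∀ r, 1 ≤ h r) ∧
      ∀ σ : Fin R → Equiv.Perm (Fin n),
        ∃ A : Fin n → Finset ℤ,
          (∀ k, (A k).Nonempty) ∧
          ∀ r : Fin R, ∀ j k : Fin n,
            (h r • A j).card < (h r • A k).card ↔ σ r j < σ r k :=
  exists_h_sequence_integers_general n R
end

section
/- Let d ≥ 0 and γ ≥ 1 be natural numbers, and let 0 = α_0 < α_1 < ⋯ < α_d be nonnegative integers such that any two of the α_i differ either by at most γ − 1 or by at least γ + 2. Define E := (γ + 1) + Σ_{i=1}^{d} min(α_i − α_{i−1}, γ + 1). Then there exist positive constants c, C and a natural number M_0, all depending only on d, such that for every natural number M ≥ M_0, the set A := ⋃_{i=0}^{d} M^{α_i}·[0, M] ⊆ ℤ and the number h := M^γ satisfy c · M^{E} ≤ |hA| ≤ C · M^{E}. -/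
/-!
Up to constants depending on `d`, `M ^ γ • A` is sandwiched between sums
`S(L) = ∑ᵢ M ^ αᵢ · [0, L]` with `L ≍ M ^ (γ + 1)`. Group the `αᵢ` into maximal runs of
consecutive exponents with gaps `≤ γ - 1`. Inside a run the dilated intervals merge into a single
interval `M ^ α_l · [0, Λ]` with `Λ ≍ L · M ^ (span of the run)`, since each new step
`M ^ gap ≤ M ^ (γ - 1) ≤ L` is shorter than the interval built so far. Across a gap `≥ γ + 2` the
sum built so far lies below the next scale, so different runs act as independent digits and the
cardinalities multiply: `#S(L) ≍ ∏_runs L · M ^ span ≍ M ^ E`.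
-/

open Pointwise Finset

namespace Finset

variable {ι α : Type*} [DecidableEq α] [AddCommMonoid α] {s : Finset ι} {f : ι → Finset α}

lemma biUnion_subset_sum (h : ∀ i ∈ s, (0 : α) ∈ f i) : s.biUnion f ⊆ ∑ i ∈ s, f i :=
  biUnion_subset.2 fun _ hi => single_le_sum (fun j hj => zero_subset.2 (h j hj)) hi

lemma nsmul_biUnion_subset_sum_nsmul (h : ∀ i ∈ s, (0 : α) ∈ f i) (n : ℕ) :
    n • s.biUnion f ⊆ ∑ i ∈ s, n • f i := by
  rw [sum_nsmul]
  exact nsmul_subset_nsmul_left (biUnion_subset_sum h)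

lemma sum_nsmul_subset_nsmul_biUnion (n : ℕ) : ∑ i ∈ s, n • f i ⊆ (#s * n) • s.biUnion f := by
  calc ∑ i ∈ s, n • f i ⊆ ∑ _i ∈ s, n • s.biUnion f :=
        sum_le_sum fun _ hi => nsmul_subset_nsmul_left (subset_biUnion_of_mem f hi)
    _ = (#s * n) • s.biUnion f := by rw [sum_const, mul_nsmul']

end Finset

lemma Finset.image_mul_left_add (u : ℤ) (s t : Finset ℤ) :
    (s + t).image (u * ·) = s.image (u * ·) + t.image (u * ·) :=
  image_add (AddMonoidHom.mulLeft u)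

lemma Finset.image_mul_left_nsmul (u : ℤ) (n : ℕ) (s : Finset ℤ) :
    (n • s).image (u * ·) = n • s.image (u * ·) :=
  image_nsmul (AddMonoidHom.mulLeft u) s n

lemma Finset.image_mul_left_image_mul_left (u v : ℤ) (s : Finset ℤ) :
    (s.image (v * ·)).image (u * ·) = s.image (u * v * ·) := by
  simp only [image_image, Function.comp_def, mul_assoc]

lemma Nat.le_two_mul_mul_div {m n : ℕ} (hn : 0 < n) (h : n ≤ m) : m ≤ 2 * n * (m / n) := by
  have hdiv := Nat.div_add_mod m n
  have hmod := Nat.mod_lt m hn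
  have hq : n ≤ n * (m / n) := Nat.le_mul_of_pos_right _ (Nat.div_pos h hn)
  linarith

lemma Int.Icc_zero_add_image_mul_Icc_zero {a b t : ℤ} (hb : 0 ≤ b) (ht : 1 ≤ t) (hta : t ≤ a + 1) :
    Icc 0 a + (Icc 0 b).image (t * ·) = Icc 0 (a + t * b) := by
  ext x
  simp only [mem_add, mem_image, mem_Icc]
  constructor
  · rintro ⟨y, hy, _, ⟨z, hz, rfl⟩, rfl⟩
    constructor <;> nlinarith
  · rintro ⟨hx0, hx⟩
    -- take as many `t`-steps as possible, then fill the remainder of length `< t ≤ a + 1`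
    set z := min (x / t) b
    have hz0 : 0 ≤ z := le_min (Int.ediv_nonneg hx0 (by omega)) hb
    have hzt : t * z ≤ x := (mul_le_mul_of_nonneg_left (min_le_left _ _) (by omega)).trans
      (Int.mul_ediv_self_le (by omega))
    have hrem : x - t * z ≤ a := by
      rcases le_total (x / t) b with h | h
      · have := Int.lt_mul_ediv_self_add (x := x) (by omega : 0 < t)
        simp only [z, min_eq_left h]; linarith
      · simp only [z, min_eq_right h]; linarith
    exact ⟨x - t * z, ⟨by linarith, hrem⟩, t * z, ⟨z, ⟨hz0, min_le_right _ _⟩, rfl⟩, by ring⟩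

lemma Int.Icc_zero_add_Icc_zero {a b : ℤ} (ha : 0 ≤ a) (hb : 0 ≤ b) :
    Icc 0 a + Icc 0 b = Icc 0 (a + b) := by
  simpa using Int.Icc_zero_add_image_mul_Icc_zero hb le_rfl (by omega : (1:ℤ) ≤ a + 1)

lemma Int.nsmul_Icc_zero_s17 (n : ℕ) {m : ℤ} (hm : 0 ≤ m) : n • Icc 0 m = Icc 0 (n * m) := by
  induction n with
  | zero => simp only [zero_nsmul, Nat.cast_zero, zero_mul, Icc_self]; rfl
  | succ n ih =>
    rw [succ_nsmul, ih, Int.Icc_zero_add_Icc_zero (by positivity) hm]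
    push_cast; ring_nf

lemma Int.card_add_image_mul_Icc_zero {B : Finset ℤ} {u : ℤ} (hB : B ⊆ Ico 0 u) (Λ : ℕ) :
    #(B + (Icc 0 (Λ : ℤ)).image (u * ·)) = #B * (Λ + 1) := by
  obtain rfl | ⟨b₀, hb₀⟩ := B.eq_empty_or_nonempty
  · simp
  have hu : 0 < u := (mem_Ico.1 (hB hb₀)).1.trans_lt (mem_Ico.1 (hB hb₀)).2
  rw [card_add_iff.2, card_image_of_injective _ (mul_right_injective₀ hu.ne'), Int.card_Icc]
  · simp
  -- base-`u` digits: the `B`-part of `b + u * y` is its residue mod `u`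
  rintro ⟨b, y⟩ hby ⟨b', y'⟩ hby' heq
  simp only [Set.mem_prod, mem_coe] at hby hby'
  have hres : ∀ b ∈ B, ∀ y : ℤ, (b + u * y) % u = b := fun b hb y => by
    have := mem_Ico.1 (hB hb)
    rw [Int.add_mul_emod_self_left, Int.emod_eq_of_lt this.1 this.2]
  obtain ⟨hb, z, -, rfl⟩ := And.imp_right mem_image.1 hby
  obtain ⟨hb', z', -, rfl⟩ := And.imp_right mem_image.1 hby'
  have hbb : b = b' := by rw [← hres b hb z, ← hres b' hb' z']; exact congrArg (· % u) heq
  subst hbb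
  simpa using heq

lemma Int.add_image_mul_Icc_zero_subset_Ico {B : Finset ℤ} {u : ℤ} (hB : B ⊆ Ico 0 u) (Λ : ℤ) :
    B + (Icc 0 Λ).image (u * ·) ⊆ Ico 0 (u * (Λ + 1)) := by
  intro x hx
  simp only [mem_add, mem_image, mem_Icc] at hx
  obtain ⟨b, hb, _, ⟨y, hy, rfl⟩, rfl⟩ := hx
  have hb := mem_Ico.1 (hB hb)
  rw [mem_Ico]
  constructor <;> nlinarith

lemma Int.nsmul_image_mul_Icc_zero (u : ℤ) (n m : ℕ) :
    n • (Icc 0 (m : ℤ)).image (u * ·) = (Icc 0 ((n * m : ℕ) : ℤ)).image (u * ·) := by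
  rw [← image_mul_left_nsmul, Int.nsmul_Icc_zero_s17 n (Nat.cast_nonneg m), Nat.cast_mul]

lemma Int.add_image_mul_Icc_zero_add_image_mul_Icc_zero (B : Finset ℤ) {u t a b : ℤ}
    (hb : 0 ≤ b) (ht : 1 ≤ t) (hta : t ≤ a + 1) :
    B + (Icc 0 a).image (u * ·) + (Icc 0 b).image (u * t * ·) =
      B + (Icc 0 (a + t * b)).image (u * ·) := by
  rw [← image_mul_left_image_mul_left, add_assoc, ← image_mul_left_add,
    Int.Icc_zero_add_image_mul_Icc_zero hb ht hta]

lemma Int.zero_mem_image_mul_Icc_zero (u : ℤ) (m : ℕ) : (0 : ℤ) ∈ (Icc 0 (m : ℤ)).image (u * ·) :=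
  mem_image.2 ⟨0, by simp, mul_zero u⟩

namespace MultiscaleSumset

variable (M : ℕ) (α : ℕ → ℕ)

noncomputable def dilatedIntervalSum (L n : ℕ) : Finset ℤ :=
  ∑ i ∈ range (n + 1), (Icc (0 : ℤ) L).image ((M : ℤ) ^ α i * ·)

def sumsetExponent (γ n : ℕ) : ℕ := (γ + 1) + ∑ i ∈ range n, min (α (i + 1) - α i) (γ + 1)

lemma dilatedIntervalSum_succ (L n : ℕ) :
    dilatedIntervalSum M α L (n + 1) =
      dilatedIntervalSum M α L n + (Icc (0 : ℤ) L).image ((M : ℤ) ^ α (n + 1) * ·) :=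
  sum_range_succ _ _

lemma sumsetExponent_succ (γ n : ℕ) :
    sumsetExponent α γ (n + 1) = sumsetExponent α γ n + min (α (n + 1) - α n) (γ + 1) := by
  rw [sumsetExponent, sum_range_succ, ← add_assoc, sumsetExponent]

/-- Split `α 0, …, α n` into maximal runs with gaps `≤ γ - 1`. The last run, starting at index
`l`, sums to the dilated interval `M ^ α l · [0, Λ]`; the earlier runs sum to a set `B` of
residues mod `M ^ α l` with `#B ≍ M ^ e`. -/
structure BlockDecomposition (L γ c n : ℕ) where
  l : ℕ
  B : Finset ℤ
  Λ : ℕ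
  e : ℕ
  alpha_le : α l ≤ α n
  l_le : l ≤ n
  sum_eq : dilatedIntervalSum M α L n = B + (Icc 0 (Λ : ℤ)).image ((M : ℤ) ^ α l * ·)
  subset_Ico : B ⊆ Ico 0 ((M : ℤ) ^ α l)
  le_length : L * M ^ (α n - α l) ≤ Λ
  length_le : Λ ≤ (n - l + 1) * (L * M ^ (α n - α l))
  exponent_eq : sumsetExponent α γ n = e + (α n - α l) + (γ + 1)
  pow_le_card : M ^ e ≤ c ^ n * #B
  card_le_pow : #B ≤ c ^ n * M ^ e

namespace BlockDecomposition

variable {M α} {L γ c n : ℕ}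

def zero (hM : 0 < M) : BlockDecomposition M α L γ c 0 where
  l := 0
  B := {0}
  Λ := L
  e := 0
  alpha_le := le_rfl
  l_le := le_rfl
  sum_eq := by rw [dilatedIntervalSum, zero_add, sum_range_one, singleton_zero, zero_add]
  subset_Ico := by simp [hM]
  le_length := by simp
  length_le := by simp
  exponent_eq := by simp [sumsetExponent]
  pow_le_card := by simp
  card_le_pow := by simp

def extendRun (D : BlockDecomposition M α L γ c n) (hM : 0 < M) (hc : 1 ≤ c)
    (hL : M ^ (γ - 1) ≤ L) (hlt : α n < α (n + 1)) (hgap : α (n + 1) - α n ≤ γ - 1) :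
    BlockDecomposition M α L γ c (n + 1) where
  l := D.l
  B := D.B
  Λ := D.Λ + L * M ^ (α (n + 1) - α D.l)
  e := D.e
  alpha_le := D.alpha_le.trans hlt.le
  l_le := D.l_le.trans n.le_succ
  sum_eq := by
    have hsplit : (M : ℤ) ^ α (n + 1) = (M : ℤ) ^ α D.l * (M : ℤ) ^ (α (n + 1) - α D.l) := by
      rw [← pow_add, Nat.add_sub_cancel' (D.alpha_le.trans hlt.le)]
    have hstep : M ^ (α (n + 1) - α D.l) ≤ D.Λ := calc
      M ^ (α (n + 1) - α D.l) = M ^ (α n - α D.l) * M ^ (α (n + 1) - α n) := by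
        rw [← pow_add]; congr 1; have := D.alpha_le; omega
      _ ≤ M ^ (α n - α D.l) * L := by gcongr; exact (Nat.pow_le_pow_right hM hgap).trans hL
      _ ≤ D.Λ := by rw [mul_comm]; exact D.le_length
    rw [dilatedIntervalSum_succ, D.sum_eq, hsplit,
      Int.add_image_mul_Icc_zero_add_image_mul_Icc_zero _ (Nat.cast_nonneg L)
        (one_le_pow₀ (by exact_mod_cast hM)) (by exact_mod_cast hstep.trans (Nat.le_succ _))]
    push_cast; ring_nf
  subset_Ico := D.subset_Ico
  le_length := le_add_self
  length_le := by
    have hle : M ^ (α n - α D.l) ≤ M ^ (α (n + 1) - α D.l) :=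
      Nat.pow_le_pow_right hM (Nat.sub_le_sub_right hlt.le _)
    have := D.length_le.trans (Nat.mul_le_mul_left _ (Nat.mul_le_mul_left L hle))
    rw [show n + 1 - D.l + 1 = n - D.l + 1 + 1 by have := D.l_le; omega]
    linarith
  exponent_eq := by
    rw [sumsetExponent_succ, D.exponent_eq, min_eq_left (by omega)]
    have := D.alpha_le; omega
  pow_le_card := D.pow_le_card.trans (by gcongr; exact n.le_succ)
  card_le_pow := D.card_le_pow.trans (by gcongr; exact n.le_succ)

lemma succ_length_le (D : BlockDecomposition M α L γ c n) (hM : 0 < M) (hL0 : 0 < L)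
    (hc : 2 * (n + 1) ≤ c) : D.Λ + 1 ≤ c * (L * M ^ (α n - α D.l)) := by
  have hx : 1 ≤ L * M ^ (α n - α D.l) := Nat.one_le_iff_ne_zero.2 (by positivity)
  calc D.Λ + 1 ≤ (n + 1) * (L * M ^ (α n - α D.l)) + (n + 1) * (L * M ^ (α n - α D.l)) :=
        add_le_add (D.length_le.trans (by gcongr; omega)) (hx.trans (by nlinarith))
    _ = 2 * (n + 1) * (L * M ^ (α n - α D.l)) := by ring
    _ ≤ c * (L * M ^ (α n - α D.l)) := by gcongr

lemma card_bounds (D : BlockDecomposition M α L γ c n) (hM : 0 < M) (hc : 2 * (n + 1) ≤ c)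
    (hL : L ≤ M ^ (γ + 1)) (hcL : M ^ (γ + 1) ≤ c * L) :
    M ^ sumsetExponent α γ n ≤ c ^ (n + 1) * #(dilatedIntervalSum M α L n) ∧
      #(dilatedIntervalSum M α L n) ≤ c ^ (n + 1) * M ^ sumsetExponent α γ n := by
  have hL0 : 0 < L := Nat.pos_of_mul_pos_left ((Nat.pow_pos hM).trans_le hcL)
  rw [D.sum_eq, Int.card_add_image_mul_Icc_zero D.subset_Ico, D.exponent_eq, pow_add, pow_add]
  constructor
  · calc M ^ D.e * M ^ (α n - α D.l) * M ^ (γ + 1)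
        ≤ c ^ n * #D.B * M ^ (α n - α D.l) * (c * L) := by gcongr; exact D.pow_le_card
      _ = c ^ (n + 1) * #D.B * (L * M ^ (α n - α D.l)) := by ring
      _ ≤ c ^ (n + 1) * (#D.B * (D.Λ + 1)) := by rw [mul_assoc]; gcongr; linarith [D.le_length]
  · calc #D.B * (D.Λ + 1) ≤ c ^ n * M ^ D.e * (c * (L * M ^ (α n - α D.l))) :=
        Nat.mul_le_mul D.card_le_pow (D.succ_length_le hM hL0 hc)
      _ ≤ c ^ n * M ^ D.e * (c * (M ^ (γ + 1) * M ^ (α n - α D.l))) := by gcongr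
      _ = c ^ (n + 1) * (M ^ D.e * M ^ (α n - α D.l) * M ^ (γ + 1)) := by ring

noncomputable def startRun (D : BlockDecomposition M α L γ c n) (hM : 0 < M)
    (hc : 2 * (n + 1) ≤ c) (hcM : c ≤ M) (hL : L ≤ M ^ (γ + 1)) (hcL : M ^ (γ + 1) ≤ c * L)
    (hgap : γ + 2 ≤ α (n + 1) - α n) :
    BlockDecomposition M α L γ c (n + 1) where
  l := n + 1
  B := dilatedIntervalSum M α L n
  Λ := L
  e := sumsetExponent α γ n
  alpha_le := le_rfl
  l_le := le_rfl
  sum_eq := dilatedIntervalSum_succ M α L n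
  subset_Ico := by
    have hL0 : 0 < L := Nat.pos_of_mul_pos_left ((Nat.pow_pos hM).trans_le hcL)
    have hbound : M ^ α D.l * (D.Λ + 1) ≤ M ^ α (n + 1) := calc
      M ^ α D.l * (D.Λ + 1) ≤ M ^ α D.l * (c * (M ^ (γ + 1) * M ^ (α n - α D.l))) := by
        gcongr; exact (D.succ_length_le hM hL0 hc).trans (by gcongr)
      _ ≤ M * M ^ (γ + 1) * (M ^ α D.l * M ^ (α n - α D.l)) := by
        rw [show M * M ^ (γ + 1) * (M ^ α D.l * M ^ (α n - α D.l)) =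
          M ^ α D.l * (M * (M ^ (γ + 1) * M ^ (α n - α D.l))) by ring]
        gcongr
      _ = M ^ (α n + (γ + 2)) := by rw [← pow_add, Nat.add_sub_cancel' D.alpha_le]; ring
      _ ≤ M ^ α (n + 1) := Nat.pow_le_pow_right hM (by omega)
    rw [D.sum_eq]
    refine (Int.add_image_mul_Icc_zero_subset_Ico D.subset_Ico _).trans (Ico_subset_Ico_right ?_)
    exact_mod_cast hbound
  le_length := by simp
  length_le := by simp
  exponent_eq := by rw [sumsetExponent_succ, min_eq_right (by omega)]; simp
  pow_le_card := (D.card_bounds hM hc hL hcL).1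
  card_le_pow := (D.card_bounds hM hc hL hcL).2

end BlockDecomposition

variable {M α} {d γ L c : ℕ}

lemma pow_pred_le_of_pow_succ_le (hcM : c ≤ M) (hcL : M ^ (γ + 1) ≤ c * L) (hM : 0 < M) :
    M ^ (γ - 1) ≤ L := by
  refine Nat.le_of_mul_le_mul_right ?_ hM
  calc M ^ (γ - 1) * M ≤ M ^ (γ + 1) := by rw [← pow_succ]; exact Nat.pow_le_pow_right hM (by omega)
    _ ≤ c * L := hcL
    _ ≤ L * M := by rw [mul_comm]; gcongr

theorem nonempty_blockDecomposition (hM : 2 * (d + 1) ≤ M)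
    (hlt : ∀ i < d, α i < α (i + 1))
    (hgap : ∀ i < d, α (i + 1) - α i ≤ γ - 1 ∨ γ + 2 ≤ α (i + 1) - α i)
    (hL : L ≤ M ^ (γ + 1)) (hcL : M ^ (γ + 1) ≤ 2 * (d + 1) * L) :
    ∀ n ≤ d, Nonempty (BlockDecomposition M α L γ (2 * (d + 1)) n) := by
  have hM0 : 0 < M := by omega
  intro n
  induction n with
  | zero => exact fun _ => ⟨.zero hM0⟩
  | succ n ih =>
    intro hn
    obtain ⟨D⟩ := ih (by omega)
    rcases hgap n hn with hsmall | hlarge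
    · exact ⟨D.extendRun hM0 (by omega) (pow_pred_le_of_pow_succ_le hM hcL hM0) (hlt n hn) hsmall⟩
    · exact ⟨D.startRun hM0 (by omega) hM hL hcL hlarge⟩

theorem card_dilatedIntervalSum_bounds (hM : 2 * (d + 1) ≤ M)
    (hlt : ∀ i < d, α i < α (i + 1))
    (hgap : ∀ i < d, α (i + 1) - α i ≤ γ - 1 ∨ γ + 2 ≤ α (i + 1) - α i)
    (hL : L ≤ M ^ (γ + 1)) (hcL : M ^ (γ + 1) ≤ 2 * (d + 1) * L) :
    M ^ sumsetExponent α γ d ≤ (2 * (d + 1)) ^ (d + 1) * #(dilatedIntervalSum M α L d) ∧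
      #(dilatedIntervalSum M α L d) ≤ (2 * (d + 1)) ^ (d + 1) * M ^ sumsetExponent α γ d :=
  have ⟨D⟩ := nonempty_blockDecomposition hM hlt hgap hL hcL d le_rfl
  D.card_bounds (by omega) le_rfl hL hcL

variable (M α d)

noncomputable def multiscaleSet : Finset ℤ :=
  (range (d + 1)).biUnion fun i => (Icc (0 : ℤ) M).image fun x => (M : ℤ) ^ α i * x

lemma nsmul_multiscaleSet_subset (h : ℕ) :
    h • multiscaleSet M α d ⊆ dilatedIntervalSum M α (h * M) d :=
  (nsmul_biUnion_subset_sum_nsmul (fun _ _ => Int.zero_mem_image_mul_Icc_zero _ _) h).trans_eq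
    (sum_congr rfl fun _ _ => Int.nsmul_image_mul_Icc_zero _ h M)

lemma dilatedIntervalSum_subset_nsmul_multiscaleSet {k h : ℕ} (hkh : (d + 1) * k ≤ h) :
    dilatedIntervalSum M α (k * M) d ⊆ h • multiscaleSet M α d := calc
  dilatedIntervalSum M α (k * M) d =
      ∑ i ∈ range (d + 1), k • (Icc (0 : ℤ) M).image ((M : ℤ) ^ α i * ·) :=
    sum_congr rfl fun _ _ => (Int.nsmul_image_mul_Icc_zero _ k M).symm
  _ ⊆ (#(range (d + 1)) * k) • multiscaleSet M α d := sum_nsmul_subset_nsmul_biUnion k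
  _ ⊆ h • multiscaleSet M α d := nsmul_subset_nsmul_right
    (mem_biUnion.2 ⟨0, by simp, Int.zero_mem_image_mul_Icc_zero _ _⟩) (by rwa [card_range])

end MultiscaleSumset

open MultiscaleSumset

/-- **Lemma (main multiscale estimate).** Let `d ≥ 0`, and let `γ ≥ 1` and
`0 = α_0 < α_1 < ⋯ < α_d` be such that any two `α_i` differ by at most `γ − 1` or by at
least `γ + 2`.  With `E := (γ+1) + Σ_{i=1}^{d} min(α_i − α_{i−1}, γ+1)`, there are
positive constants `c, C` and a threshold `M₀`, depending only on `d`, such that for all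
`M ≥ M₀` the set `A := ⋃_{i=0}^{d} M^{α_i}·[0, M]` and `h := M^γ` satisfy
`c·M^E ≤ |hA| ≤ C·M^E`. -/
theorem multiscale_sumset_estimate (d : ℕ) :
    ∃ c C : ℝ, 0 < c ∧ 0 < C ∧ ∃ M₀ : ℕ,
      ∀ γ : ℕ, 1 ≤ γ →
      ∀ α : ℕ → ℕ, α 0 = 0 → (∀ i, i < d → α i < α (i + 1)) →
        (∀ i j : ℕ, i < j → j ≤ d →
          (α j - α i ≤ γ - 1 ∨ γ + 2 ≤ α j - α i)) →
      ∀ E : ℕ, E = (γ + 1) + ∑ i ∈ Finset.range d, min (α (i + 1) - α i) (γ + 1) →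
      ∀ M : ℕ, M₀ ≤ M →
      ∀ A : Finset ℤ,
        A = (Finset.range (d + 1)).biUnion
          (fun i => (Finset.Icc (0 : ℤ) (M : ℤ)).image fun x => ((M : ℤ) ^ α i) * x) →
        c * (M : ℝ) ^ E ≤ ((M ^ γ • A).card : ℝ) ∧
          ((M ^ γ • A).card : ℝ) ≤ C * (M : ℝ) ^ E := by
  set K := (2 * (d + 1)) ^ (d + 1)
  refine ⟨(K : ℝ)⁻¹, K, by positivity, by positivity, 2 * (d + 1), ?_⟩
  rintro γ hγ α - hlt hgap E rfl M hM A rfl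
  have hgap' : ∀ i < d, α (i + 1) - α i ≤ γ - 1 ∨ γ + 2 ≤ α (i + 1) - α i :=
    fun i hi => hgap i (i + 1) i.lt_succ_self hi
  set k := M ^ γ / (d + 1)
  have hk : (d + 1) * k ≤ M ^ γ := Nat.mul_div_le _ _
  have hk' : M ^ γ ≤ 2 * (d + 1) * k :=
    Nat.le_two_mul_mul_div d.succ_pos ((by omega : d + 1 ≤ M).trans (Nat.le_self_pow (by omega) M))
  have hlower := (card_dilatedIntervalSum_bounds (L := k * M) hM hlt hgap'
    (by rw [pow_succ]; gcongr; exact Nat.div_le_self _ _)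
    (by rw [pow_succ, ← mul_assoc]; gcongr)).1
  have hupper := (card_dilatedIntervalSum_bounds (L := M ^ γ * M) hM hlt hgap'
    (by rw [pow_succ]) (by rw [pow_succ]; exact Nat.le_mul_of_pos_left _ (by omega))).2
  have hsub := dilatedIntervalSum_subset_nsmul_multiscaleSet M α d hk
  have hsup := nsmul_multiscaleSet_subset M α d (M ^ γ)
  constructor
  · rw [inv_mul_le_iff₀ (by positivity)]
    exact_mod_cast hlower.trans (Nat.mul_le_mul_left K (card_le_card hsub))
  · exact_mod_cast (card_le_card hsup).trans hupper
end

section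
/- Let n, R ≥ 1 be natural numbers and let σ_1, …, σ_R be permutations of {1, …, n}. Then there exist a natural number d ≥ 1, strictly increasing sequences of nonnegative integers 0 = α_{k,0} < α_{k,1} < ⋯ < α_{k,d} for each 1 ≤ k ≤ n, and natural numbers γ_1 < γ_2 < ⋯ < γ_R, such that: (a) for every 1 ≤ k ≤ n, every 1 ≤ r ≤ R, and all 0 ≤ i < j ≤ d, the difference α_{k,j} − α_{k,i} is either at most γ_r − 1 or at least γ_r + 2; and (b) for each 1 ≤ r ≤ R, the quantities E(r, 1), …, E(r, n), where E(r, k) := (γ_r + 1) + Σ_{i=1}^{d} min(α_{k,i} − α_{k,i−1}, γ_r + 1), satisfy: for all 1 ≤ j, k ≤ n, E(r, j) < E(r, k) if and only if σ_r(j) < σ_r(k). -/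
namespace ChoosingScales

def gam (n : ℕ) : ℕ → ℕ
  | 0 => 1
  | r+1 => 2 * gam n r + 4*n + 2

lemma gam_pos (n r : ℕ) : 1 ≤ gam n r := by
  induction r with
  | zero => simp [gam]
  | succ r ih => simp only [gam]; omega

lemma gam_strictMono (n : ℕ) : StrictMono (gam n) := by
  apply strictMono_nat_of_lt_succ
  intro r
  have := gam_pos n r
  simp only [gam]; omega

lemma gam_mono (n : ℕ) : Monotone (gam n) := (gam_strictMono n).monotone

def Gb (n i : ℕ) : ℕ := gam n i + 2*n + 2

variable {n R : ℕ}

def pval (σ : Fin R → Equiv.Perm (Fin n)) (i : ℕ) (k : Fin n) : ℕ :=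
  if h : i < R then ((σ ⟨i, h⟩) k : ℕ) else 0

lemma pval_lt (σ : Fin R → Equiv.Perm (Fin n)) (hn : 1 ≤ n) (i : ℕ) (k : Fin n) :
    pval σ i k < n := by
  unfold pval; split
  · exact Fin.is_lt _
  · omega

def ee (σ : Fin R → Equiv.Perm (Fin n)) (k : Fin n) : ℕ → ℕ
  | 0 => 1 + pval σ 0 k
  | i+1 => n + pval σ (i+1) k - pval σ i k

lemma ee_bounds (σ : Fin R → Equiv.Perm (Fin n)) (hn : 1 ≤ n) (k : Fin n) (i : ℕ) :
    1 ≤ ee σ k i ∧ ee σ k i ≤ 2*n - 1 := by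
  cases i with
  | zero =>
    have := pval_lt σ hn 0 k
    simp only [ee]; omega
  | succ i =>
    have h1 := pval_lt σ hn (i+1) k
    have h2 := pval_lt σ hn i k
    simp only [ee]; omega

def gg (σ : Fin R → Equiv.Perm (Fin n)) (k : Fin n) (i : ℕ) : ℕ := Gb n i + ee σ k i

lemma gg_lb (σ : Fin R → Equiv.Perm (Fin n)) (hn : 1 ≤ n) (k : Fin n) (i : ℕ) :
    gam n i + 2*n + 3 ≤ gg σ k i := by
  have := (ee_bounds σ hn k i).1
  unfold gg Gb; omega

lemma gg_ub (σ : Fin R → Equiv.Perm (Fin n)) (hn : 1 ≤ n) (k : Fin n) (i : ℕ) :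
    gg σ k i ≤ gam n i + 4*n + 1 := by
  have := (ee_bounds σ hn k i).2
  unfold gg Gb; omega

lemma sum_g_le (σ : Fin R → Equiv.Perm (Fin n)) (hn : 1 ≤ n) (k : Fin n) (m : ℕ) :
    ∑ i ∈ Finset.range m, gg σ k i ≤ gam n m - 1 := by
  induction m with
  | zero => simp [gam]
  | succ m ih =>
    rw [Finset.sum_range_succ]
    have h1 := gg_ub σ hn k m
    have h2 := gam_pos n m
    have h3 : gam n (m+1) = 2 * gam n m + 4*n + 2 := rfl
    omega

lemma sum_e (σ : Fin R → Equiv.Perm (Fin n)) (hn : 1 ≤ n) (k : Fin n) (m : ℕ) :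
    ∑ i ∈ Finset.range (m+1), ee σ k i = 1 + m*n + pval σ m k := by
  induction m with
  | zero => simp [ee]
  | succ m ih =>
    rw [Finset.sum_range_succ, ih]
    have h1 := pval_lt σ hn m k
    have h2 : ee σ k (m+1) = n + pval σ (m+1) k - pval σ m k := rfl
    have h3 : (m+1)*n = m*n + n := by ring
    omega

end ChoosingScales

open ChoosingScales in
/-- **Proposition (choosing the scales).** For `n, R ≥ 1` and permutations
`σ_1, …, σ_R` of `{1, …, n}`, there exist `d ≥ 1`, strictly increasing sequences
`0 = α_{k,0} < α_{k,1} < ⋯ < α_{k,d}` (for `1 ≤ k ≤ n`), and `γ_1 < ⋯ < γ_R` such that: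
(a) for all `k`, `r`, and `0 ≤ i < j ≤ d`, the difference `α_{k,j} − α_{k,i}` is at most
`γ_r − 1` or at least `γ_r + 2`; and (b) for each `r`, the quantities
`E(r,k) := (γ_r + 1) + Σ_{i=1}^{d} min(α_{k,i} − α_{k,i−1}, γ_r + 1)` have the same
relative order as `σ_r`. -/
theorem choosing_the_scales (n R : ℕ) (hn : 1 ≤ n) (hR : 1 ≤ R)
    (σ : Fin R → Equiv.Perm (Fin n)) :
    ∃ d : ℕ, 1 ≤ d ∧
    ∃ α : Fin n → ℕ → ℕ, ∃ γ : Fin R → ℕ,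
      StrictMono γ ∧ (∀ r, 1 ≤ γ r) ∧
      (∀ k, α k 0 = 0) ∧
      (∀ k, ∀ i, i < d → α k i < α k (i + 1)) ∧
      (∀ k : Fin n, ∀ r : Fin R, ∀ i j : ℕ, i < j → j ≤ d →
        (α k j - α k i ≤ γ r - 1 ∨ γ r + 2 ≤ α k j - α k i)) ∧
      (∀ E : Fin R → Fin n → ℕ,
        (∀ r k, E r k =
          (γ r + 1) + ∑ i ∈ Finset.range d, min (α k (i + 1) - α k i) (γ r + 1)) →
        ∀ r : Fin R, ∀ j k : Fin n, E r j < E r k ↔ σ r j < σ r k) := by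
  refine ⟨R, hR, fun k m => ∑ i ∈ Finset.range m, gg σ k i,
    fun r => gam n (r.val + 1), ?_, ?_, ?_, ?_, ?_, ?_⟩
  · intro a b hab
    exact gam_strictMono n (Nat.succ_lt_succ hab)
  · intro r; exact gam_pos n _
  · intro k; simp
  · intro k i _
    dsimp only
    rw [Finset.sum_range_succ]
    have := gg_lb σ hn k i
    omega
  · intro k r i j hij hjd
    dsimp only
    have hsplit := Finset.sum_range_add_sum_Ico (gg σ k) hij.le
    have hdiff : (∑ s ∈ Finset.range j, gg σ k s) - (∑ s ∈ Finset.range i, gg σ k s)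
        = ∑ s ∈ Finset.Ico i j, gg σ k s := by omega
    rcases le_or_gt j (r.val + 1) with hle | hlt
    · left
      have h1 := sum_g_le σ hn k j
      have h2 : gam n j ≤ gam n (r.val + 1) := gam_mono n hle
      omega
    · right
      have hmem : j - 1 ∈ Finset.Ico i j := by
        simp only [Finset.mem_Ico]; omega
      have h1 : gg σ k (j-1) ≤ ∑ s ∈ Finset.Ico i j, gg σ k s :=
        Finset.single_le_sum (fun s _ => Nat.zero_le _) hmem
      have h2 := gg_lb σ hn k (j-1)
      have h3 : gam n (r.val + 1) ≤ gam n (j-1) := gam_mono n (by omega)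
      omega
  · intro E hE r j k
    have key : ∀ k' : Fin n, E r k' = (gam n (r.val+1) + 1)
        + ((∑ i ∈ Finset.range (r.val+1), Gb n i) + (1 + r.val * n + pval σ r.val k'))
        + (R - (r.val+1)) * (gam n (r.val+1) + 1) := by
      intro k'
      rw [hE]
      have hgap : ∀ i : ℕ, (∑ s ∈ Finset.range (i+1), gg σ k' s)
          - (∑ s ∈ Finset.range i, gg σ k' s) = gg σ k' i := by
        intro i; rw [Finset.sum_range_succ]; omega
      have hrR : r.val + 1 ≤ R := r.isLt
      rw [← Finset.sum_range_add_sum_Ico _ hrR]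
      have hsmall : ∀ i ∈ Finset.range (r.val+1),
          min ((∑ s ∈ Finset.range (i+1), gg σ k' s) - ∑ s ∈ Finset.range i, gg σ k' s)
            (gam n (r.val+1) + 1) = gg σ k' i := by
        intro i hi
        rw [hgap i]
        simp only [Finset.mem_range] at hi
        have h1 := gg_ub σ hn k' i
        have h2 : gam n (i+1) ≤ gam n (r.val+1) := gam_mono n hi
        have h3 : gam n (i+1) = 2 * gam n i + 4*n + 2 := rfl
        have h4 := gam_pos n i
        exact min_eq_left (by omega)
      have hbig : ∀ i ∈ Finset.Ico (r.val+1) R,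
          min ((∑ s ∈ Finset.range (i+1), gg σ k' s) - ∑ s ∈ Finset.range i, gg σ k' s)
            (gam n (r.val+1) + 1) = gam n (r.val+1) + 1 := by
        intro i hi
        rw [hgap i]
        simp only [Finset.mem_Ico] at hi
        have h1 := gg_lb σ hn k' i
        have h2 : gam n (r.val+1) ≤ gam n i := gam_mono n hi.1
        exact min_eq_right (by omega)
      rw [Finset.sum_congr rfl hsmall, Finset.sum_congr rfl hbig,
        Finset.sum_const, Nat.card_Ico, smul_eq_mul]
      have hsum : ∑ i ∈ Finset.range (r.val+1), gg σ k' i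
          = (∑ i ∈ Finset.range (r.val+1), Gb n i) + (1 + r.val * n + pval σ r.val k') := by
        unfold gg
        rw [Finset.sum_add_distrib, sum_e σ hn k' r.val]
      rw [hsum]
      dsimp only
      ring
    rw [key j, key k]
    have hpj : pval σ r.val j = (σ r j : ℕ) := by
      simp [pval, r.isLt, Fin.eta]
    have hpk : pval σ r.val k = (σ r k : ℕ) := by
      simp [pval, r.isLt, Fin.eta]
    rw [hpj, hpk]
    constructor
    · intro h; exact Fin.lt_def.mpr (by omega)
    · intro h; have := Fin.lt_def.mp h; omega
end
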